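/- arXiv:2410.16550 — 5 statements merged into one kernel-verified Lean document; each statement's English description precedes it below -/
import Mathlib

section
/- Let n ≥ 2 and α = {i<j} ∈ Pair[n]. There exists c = c(n,Φ) ∈ (0,∞) such that for every ε ∈ (0,1], every t > 0, and all f ∈ L²((ℝ²)^n), g ∈ L²(Y^ε_α): ∫_{Y^ε_α} ∫_{(ℝ²)^n} |g(y)| φ(y_r) G(t, S^ε_α y − x) |f(x)| dx dy ≤ c t^{−1/2} ‖g‖_{L²} ‖f‖_{L²}. Equivalently, the integral operator P^ε_α(t) with kernel φ(y_r) G(t, S^ε_α y − x), and its adjoint, have L² → L² operator norm at most c t^{−1/2}, uniformly in ε ∈ (0,1]. -/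
open MeasureTheory Real Filter
open scoped ENNReal NNReal BigOperators

noncomputable section

/-- ℝ² realized as ℝ × ℝ. -/
abbrev R2 : Type := ℝ × ℝ

/-- ℓ¹ norm on ℝ². -/
def nrm1 (x : R2) : ℝ := |x.1| + |x.2|

/-- square of the Euclidean norm on ℝ². -/
def nrmsq (x : R2) : ℝ := x.1 ^ 2 + x.2 ^ 2

/-- heat kernel on ℝ². -/
def hk (t : ℝ) (x : R2) : ℝ := (2 * π * t)⁻¹ * Real.exp (-nrmsq x / (2 * t))

/-- heat kernel on (ℝ²)ⁿ. -/
def G (n : ℕ) (t : ℝ) (x : Fin n → R2) : ℝ := ∏ i, hk t (x i)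

/-- ℓ¹ norm on (ℝ²)ⁿ. -/
def nrm1n {n : ℕ} (x : Fin n → R2) : ℝ := ∑ i, nrm1 (x i)

/-- unordered pairs α = {i < j} in {1,…,n}. -/
abbrev Pair (n : ℕ) : Type := {p : Fin n × Fin n // p.1 < p.2}

/-- the indices not in α. -/
abbrev outIdx {n : ℕ} (α : Pair n) : Type := {k : Fin n // k ≠ α.1.1 ∧ k ≠ α.1.2}

/-- Y_α = ℝ² × (ℝ²)^{[n]∖α} with first coordinate the center of mass. -/
abbrev Ysp {n : ℕ} (α : Pair n) : Type := R2 × (outIdx α → R2)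

/-- Y^ε_α = ℝ² × ℝ² × (ℝ²)^{[n]∖α}, coordinates (y_r, y_c, (y_k)). -/
abbrev Yesp {n : ℕ} (α : Pair n) : Type := R2 × R2 × (outIdx α → R2)

/-- S_α : Y_α → (ℝ²)ⁿ. -/
def Sa {n : ℕ} (α : Pair n) (y : Ysp α) : Fin n → R2 :=
  fun k => if h : k ≠ α.1.1 ∧ k ≠ α.1.2 then y.2 ⟨k, h⟩ else y.1

/-- S^ε_α : Y^ε_α → (ℝ²)ⁿ. -/
def Sea {n : ℕ} (α : Pair n) (ε : ℝ) (y : Yesp α) : Fin n → R2 :=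
  fun k => if h : k ≠ α.1.1 ∧ k ≠ α.1.2 then y.2.2 ⟨k, h⟩
    else if k = α.1.1 then y.2.1 + (ε / 2) • y.1 else y.2.1 - (ε / 2) • y.1

/-- j(t) = ∫_0^∞ t^{u-1} e^{θu} / Γ(u) du. -/
def jfun (θ t : ℝ) : ℝ := ∫ u in Set.Ioi (0 : ℝ), t ^ (u - 1) * Real.exp (θ * u) / Real.Gamma u

/-- J_α(t,u,v). -/
def Jker (θ : ℝ) {n : ℕ} (α : Pair n) (t : ℝ) (u v : Ysp α) : ℝ :=
  4 * π * jfun θ t * hk (t / 2) (u.1 - v.1) * ∏ k, hk t (u.2 k - v.2 k)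

/-- iterated integral over τ_1,…,τ_k > 0 with τ_1 + ⋯ + τ_k = t (the last variable being
determined by the others). -/
def simpInt : (k : ℕ) → ℝ → ((Fin k → ℝ) → ℝ≥0∞) → ℝ≥0∞
  | 0, t, f => if t = 0 then f (fun i => i.elim0) else 0
  | 1, t, f => if 0 < t then f (fun _ => t) else 0
  | (k + 2), t, f => ∫⁻ τ in Set.Ioo 0 t, simpInt (k + 1) (t - τ) (fun v => f (Fin.cons τ v))

/-- simplex integral over positive time variables indexed by a finite type, with total sum t. -/
def simpIntF (ι : Type*) [Fintype ι] (t : ℝ) (f : (ι → ℝ) → ℝ≥0∞) : ℝ≥0∞ :=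
  simpInt (Fintype.card ι) t (fun τ => f (fun i => τ (Fintype.equivFin ι i)))

/-- Dgm[n]: finite sequences of pairs with consecutive entries distinct. -/
abbrev Dgm (n : ℕ) : Type :=
  {d : Σ m : ℕ, Fin (m + 1) → Pair n // ∀ k : Fin d.1, d.2 k.castSucc ≠ d.2 k.succ}

/-- K^{α⃗}_t(x,x'), the diagram kernel for α⃗ = (α_0,…,α_m). -/
def Kdgm (θ : ℝ) {n : ℕ} (m : ℕ) (α : Fin (m + 1) → Pair n) (t : ℝ)
    (x x' : Fin n → R2) : ℝ≥0∞ :=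
  simpIntF (Fin (m + 2) ⊕ Fin (m + 1)) t fun τ =>
    ∫⁻ u : ∀ k, Ysp (α k), ∫⁻ v : ∀ k, Ysp (α k),
      ENNReal.ofReal (G n (τ (Sum.inl 0)) (Sa (α 0) (u 0) - x))
      * (∏ k, ENNReal.ofReal (Jker θ (α k) (τ (Sum.inr k)) (u k) (v k)))
      * (∏ k : Fin m, ENNReal.ofReal (G n (τ (Sum.inl k.succ.castSucc))
          (Sa (α k.castSucc) (v k.castSucc) - Sa (α k.succ) (u k.succ))))
      * ENNReal.ofReal
          (G n (τ (Sum.inl (Fin.last (m + 1)))) (Sa (α (Fin.last m)) (v (Fin.last m)) - x'))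

/-- the limiting delta-Bose kernel K_t(x,x'). -/
def Klim (θ : ℝ) (n : ℕ) (t : ℝ) (x x' : Fin n → R2) : ℝ≥0∞ :=
  ENNReal.ofReal (G n t (x - x')) + ∑' d : Dgm n, Kdgm θ d.1.1 d.1.2 t x x'

/-- standing assumptions on the mollifier Φ. -/
def PhiOK (Φ : R2 → ℝ) : Prop :=
  ContDiff ℝ (⊤ : ℕ∞) Φ ∧ HasCompactSupport Φ ∧ (∀ x, 0 ≤ Φ x) ∧ (∫ x : R2, Φ x) = 1

/-- the coupling constant β_ε. -/
def betaEps (θ : ℝ) (Φ : R2 → ℝ) (ε : ℝ) : ℝ :=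
  2 * π / |Real.log ε| +
    π / (Real.log ε) ^ 2 *
      (θ - 2 * Real.log 2 + 2 * Real.eulerMascheroniConstant +
        2 * ∫ x : R2, ∫ x' : R2, Φ x * Real.log (Real.sqrt (nrmsq (x - x'))) * Φ x')

/-- the chain kernel: k interior nodes, k+1 heat-kernel links at scale ε. -/
def chain (ε : ℝ) (Φ : R2 → ℝ) : (k : ℕ) → (Fin (k + 1) → ℝ) → R2 → R2 → ℝ≥0∞
  | 0, τ, z, z' => ENNReal.ofReal (hk (2 * τ 0) (ε • (z - z')))
  | (k + 1), τ, z, z' => ∫⁻ w : R2,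
      ENNReal.ofReal (hk (2 * τ 0) (ε • (z - w)) * Φ w) * chain ε Φ k (fun i => τ i.succ) w z'

/-- j^ε(t,z,z'). -/
def jEps (θ : ℝ) (Φ : R2 → ℝ) (ε t : ℝ) (z z' : R2) : ℝ≥0∞ :=
  ∑' k : ℕ, ENNReal.ofReal (betaEps θ Φ ε ^ (k + 2)) *
    simpInt (k + 1) t (fun τ =>
      ENNReal.ofReal (Real.sqrt (Φ z)) * chain ε Φ k τ z z' * ENNReal.ofReal (Real.sqrt (Φ z')))

/-- J^ε_α(t,u,v). -/
def Jeps (θ : ℝ) (Φ : R2 → ℝ) {n : ℕ} (α : Pair n) (ε t : ℝ) (u v : Yesp α) : ℝ≥0∞ :=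
  jEps θ Φ ε t u.1 v.1 * ENNReal.ofReal (hk (t / 2) (u.2.1 - v.2.1)) *
    ∏ k, ENNReal.ofReal (hk t (u.2.2 k - v.2.2 k))

/-- K^{ε,α⃗}_t(x,x'), the mollified diagram kernel, with the sum over S ⊆ {0,…,m}. -/
def KepsDgm (θ : ℝ) (Φ : R2 → ℝ) (ε : ℝ) {n : ℕ} (m : ℕ) (α : Fin (m + 1) → Pair n)
    (t : ℝ) (x x' : Fin n → R2) : ℝ≥0∞ :=
  ∑ S : Finset (Fin (m + 1)),
    ENNReal.ofReal (betaEps θ Φ ε ^ S.card) *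
      simpIntF (Fin (m + 2) ⊕ {k : Fin (m + 1) // k ∉ S}) t fun τ =>
        ∫⁻ u : ∀ k, Yesp (α k), ∫⁻ v : ∀ k : {k : Fin (m + 1) // k ∉ S}, Yesp (α k.1),
          (fun w : ∀ k, Yesp (α k) =>
            ENNReal.ofReal (Real.sqrt (Φ (u 0).1)) *
            ENNReal.ofReal (G n (τ (Sum.inl 0)) (Sea (α 0) ε (u 0) - x)) *
            (∏ k : {k : Fin (m + 1) // k ∉ S},
              Jeps θ Φ (α k.1) ε (τ (Sum.inr k)) (u k.1) (v k)) *
            (∏ k : Fin m, ENNReal.ofReal (Real.sqrt (Φ (w k.castSucc).1) *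
              G n (τ (Sum.inl k.succ.castSucc))
                (Sea (α k.castSucc) ε (w k.castSucc) - Sea (α k.succ) ε (u k.succ)) *
              Real.sqrt (Φ (u k.succ).1))) *
            ENNReal.ofReal (Real.sqrt (Φ (w (Fin.last m)).1) *
              G n (τ (Sum.inl (Fin.last (m + 1)))) (Sea (α (Fin.last m)) ε (w (Fin.last m)) - x')))
          (fun k => if h : k ∈ S then u k else v ⟨k, h⟩)

/-- the mollified delta-Bose kernel K^ε_t(x,x'). -/
def Keps (θ : ℝ) (Φ : R2 → ℝ) (ε : ℝ) (n : ℕ) (t : ℝ) (x x' : Fin n → R2) : ℝ≥0∞ :=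
  ENNReal.ofReal (G n t (x - x')) + ∑' d : Dgm n, KepsDgm θ Φ ε d.1.1 d.1.2 t x x'

/-- the pairing 𝒥^ε(t; g, f). -/
def Jpairing (θ : ℝ) (Φ : R2 → ℝ) (ε t : ℝ) (g f : R2 → ℝ≥0∞) : ℝ≥0∞ :=
  ∑' k : ℕ, ENNReal.ofReal (betaEps θ Φ ε ^ (k + 2)) *
    simpInt (k + 1) t (fun τ => ∫⁻ z : R2, ∫⁻ z' : R2,
      g z * ENNReal.ofReal (Real.sqrt (Φ z)) * chain ε Φ k τ z z' *
        ENNReal.ofReal (Real.sqrt (Φ z')) * f z')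

/-- the scalar majorant B_ε(t). -/
def Bfun (β c0 ε t : ℝ) : ℝ≥0∞ :=
  ENNReal.ofReal β * ∑' k : ℕ, simpInt (k + 1) t
    (fun τ => ∏ i, ENNReal.ofReal (β / (4 * π) * ((τ i) ^ 2 + c0 * ε ^ 2 * (τ i)) ^ (-(1/2) : ℝ)))


-- ===== auxiliary lemmas =====

section Aux
open MeasureTheory Real Fintype MeasureTheory.Measure
open scoped ENNReal

lemma hk_cont (t : ℝ) : Continuous (hk t) := by
  unfold hk nrmsq; fun_prop

lemma hk_meas (t : ℝ) : Measurable fun z : R2 => ENNReal.ofReal (hk t z) :=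
  ENNReal.measurable_ofReal.comp (hk_cont t).measurable

lemma hk_nonneg {t : ℝ} (ht : 0 < t) (x : R2) : 0 ≤ hk t x := by
  unfold hk; positivity

lemma hk_le {t : ℝ} (ht : 0 < t) (x : R2) : hk t x ≤ (2 * π * t)⁻¹ := by
  have h1 : Real.exp (-nrmsq x / (2 * t)) ≤ 1 := by
    rw [Real.exp_le_one_iff]
    have : 0 ≤ nrmsq x := by unfold nrmsq; positivity
    apply div_nonpos_of_nonpos_of_nonneg <;> nlinarith
  calc hk t x ≤ (2*π*t)⁻¹ * 1 := by
        unfold hk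
        apply mul_le_mul_of_nonneg_left h1
        positivity
    _ = (2*π*t)⁻¹ := mul_one _

lemma lint_gauss {t : ℝ} (ht : 0 < t) :
    ∫⁻ x : ℝ, ENNReal.ofReal (Real.exp (-(x ^ 2) / (2 * t))) = ENNReal.ofReal (Real.sqrt (2 * π * t)) := by
  have hb : (0:ℝ) < (2*t)⁻¹ := by positivity
  have h1 : ∀ x : ℝ, -(x ^ 2) / (2 * t) = -(2*t)⁻¹ * x ^ 2 := by
    intro x; ring
  simp_rw [h1]
  rw [← ofReal_integral_eq_lintegral_ofReal (integrable_exp_neg_mul_sq hb)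
    (ae_of_all _ fun x => (Real.exp_pos _).le)]
  rw [integral_gaussian]
  congr 1
  field_simp

lemma lint_hk {t : ℝ} (ht : 0 < t) : ∫⁻ z : R2, ENNReal.ofReal (hk t z) = 1 := by
  have h2πt : (0:ℝ) < 2 * π * t := by positivity
  have e1 : ∀ z : R2, ENNReal.ofReal (hk t z) = ENNReal.ofReal ((2*π*t)⁻¹) *
      (ENNReal.ofReal (Real.exp (-(z.1 ^ 2) / (2*t))) * ENNReal.ofReal (Real.exp (-(z.2 ^ 2) / (2*t)))) := by
    intro z
    have hsplit : hk t z =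
        (2*π*t)⁻¹ * (Real.exp (-(z.1 ^ 2) / (2*t)) * Real.exp (-(z.2 ^ 2) / (2*t))) := by
      unfold hk nrmsq
      rw [← Real.exp_add]
      congr 2
      ring
    rw [hsplit, ENNReal.ofReal_mul (by positivity), ENNReal.ofReal_mul (Real.exp_pos _).le]
  simp_rw [e1]
  rw [lintegral_const_mul _ (by fun_prop), Measure.volume_eq_prod,
    lintegral_prod_mul (f := fun x : ℝ => ENNReal.ofReal (Real.exp (-(x ^ 2) / (2*t))))
      (g := fun x : ℝ => ENNReal.ofReal (Real.exp (-(x ^ 2) / (2*t)))) (by fun_prop) (by fun_prop),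
    lint_gauss ht,
    ← ENNReal.ofReal_mul (Real.sqrt_nonneg _), Real.mul_self_sqrt h2πt.le,
    ← ENNReal.ofReal_mul (by positivity), inv_mul_cancel₀ h2πt.ne', ENNReal.ofReal_one]

lemma lint_hk_sub {t : ℝ} (ht : 0 < t) (w : R2) :
    ∫⁻ z : R2, ENNReal.ofReal (hk t (z - w)) = 1 := by
  rw [(measurePreserving_sub_right (volume : Measure R2) w).lintegral_comp (hk_meas t)]
  exact lint_hk ht

lemma hk_even (t : ℝ) (z w : R2) : hk t (w - z) = hk t (z - w) := by
  have h : nrmsq (w - z) = nrmsq (z - w) := by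
    simp only [nrmsq, Prod.fst_sub, Prod.snd_sub]; ring
  unfold hk; rw [h]

lemma lint_hk_sub' {t : ℝ} (ht : 0 < t) (w : R2) :
    ∫⁻ z : R2, ENNReal.ofReal (hk t (w - z)) = 1 := by
  rw [lintegral_congr fun z => by rw [hk_even]]
  exact lint_hk_sub ht w

theorem my_lintegral_fin_prod {n : ℕ} {E : Fin n → Type*}
    [∀ i, MeasureSpace (E i)] [∀ i, SigmaFinite (volume : Measure (E i))]
    (f : (i : Fin n) → E i → ℝ≥0∞) (hf : ∀ i, Measurable (f i)) :
    ∫⁻ x : (i : Fin n) → E i, ∏ i, f i (x i) = ∏ i, ∫⁻ x, f i x := by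
  induction n with
  | zero => simp [volume_pi, lintegral_const]
  | succ n n_ih =>
      calc
        _ = ∫⁻ x : E 0 × ((i : Fin n) → E (Fin.succ i)),
            f 0 x.1 * ∏ i : Fin n, f (Fin.succ i) (x.2 i) := by
          rw [volume_pi, ← ((measurePreserving_piFinSuccAbove
            (fun i => (volume : Measure (E i))) 0).symm).lintegral_comp_emb
            (MeasurableEquiv.measurableEmbedding _)]
          simp_rw [MeasurableEquiv.piFinSuccAbove_symm_apply, Fin.insertNthEquiv,
            Fin.prod_univ_succ, Fin.insertNth_zero, Equiv.coe_fn_mk, Fin.cons_succ,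
            Fin.cons_zero]
          rw [volume_eq_prod, volume_pi]
          rfl
        _ = (∫⁻ x, f 0 x) * ∫⁻ x : (i : Fin n) → E (Fin.succ i), ∏ i : Fin n, f (Fin.succ i) (x i) := by
          rw [volume_eq_prod]
          exact lintegral_prod_mul (hf 0).aemeasurable
            (Finset.measurable_prod _ fun i _ => (hf _).comp (measurable_pi_apply i)).aemeasurable
        _ = ∏ i, ∫⁻ x, f i x := by
          rw [n_ih _ fun i => hf _, Fin.prod_univ_succ]

theorem my_lintegral_fintype_prod {ι : Type*} [Fintype ι] {E : Type*}
    [MeasureSpace E] [SigmaFinite (volume : Measure E)]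
    (f : ι → E → ℝ≥0∞) (hf : ∀ i, Measurable (f i)) :
    ∫⁻ x : ι → E, ∏ i, f i (x i) = ∏ i, ∫⁻ x, f i x := by
  let e := (equivFin ι).symm
  rw [← (volume_measurePreserving_piCongrLeft _ e).lintegral_comp_emb
    (MeasurableEquiv.measurableEmbedding _)]
  simp_rw [← e.prod_comp, MeasurableEquiv.coe_piCongrLeft, Equiv.piCongrLeft_apply_apply,
    my_lintegral_fin_prod _ (fun i => hf _)]

end Aux


section Schur
open MeasureTheory Real
open scoped ENNReal

theorem schur_bound {Y X : Type*} [MeasureSpace Y] [MeasureSpace X]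
    [SFinite (volume : Measure Y)] [SFinite (volume : Measure X)]
    (K : Y → X → ℝ≥0∞) (hK : Measurable (Function.uncurry K)) (A B : ℝ≥0∞)
    (hA : ∀ y, (∫⁻ x, K y x) ≤ A) (hB : ∀ x, (∫⁻ y, K y x) ≤ B)
    (g : Y → ℝ≥0∞) (f : X → ℝ≥0∞) (hg : Measurable g) (hf : Measurable f) :
    (∫⁻ y, ∫⁻ x, g y * K y x * f x) ≤
      A ^ (1/2:ℝ) * B ^ (1/2:ℝ) * (∫⁻ y, g y ^ 2) ^ (1/2:ℝ) * (∫⁻ x, f x ^ 2) ^ (1/2:ℝ) := by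
  have hconj : Real.HolderConjugate 2 2 := Real.HolderConjugate.two_two
  have hKy : ∀ y, Measurable (K y) := fun y => hK.of_uncurry_left
  have hKx : ∀ x, Measurable fun y => K y x := fun x => hK.of_uncurry_right
  have hpow : ∀ a : ℝ≥0∞, (a ^ (1/2:ℝ)) ^ (2:ℝ) = a := by
    intro a
    rw [← ENNReal.rpow_mul]
    norm_num
  have hHm : Measurable fun y => ∫⁻ x, K y x * f x ^ 2 :=
    Measurable.lintegral_prod_right (hK.mul ((hf.comp measurable_snd).pow_const 2))
  have inner : ∀ y, (∫⁻ x, K y x * f x) ≤ A ^ (1/2:ℝ) * (∫⁻ x, K y x * f x ^ 2) ^ (1/2:ℝ) := by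
    intro y
    have h1 : Measurable fun x => K y x ^ (1/2:ℝ) := (hKy y).pow measurable_const
    have h2 : Measurable fun x => K y x ^ (1/2:ℝ) * f x := h1.mul hf
    have step := ENNReal.lintegral_mul_le_Lp_mul_Lq volume hconj h1.aemeasurable h2.aemeasurable
    simp only [Pi.mul_apply] at step
    have e0 : (∫⁻ x, K y x ^ (1/2:ℝ) * (K y x ^ (1/2:ℝ) * f x)) = ∫⁻ x, K y x * f x := by
      apply lintegral_congr
      intro x
      rw [← mul_assoc, ← ENNReal.rpow_add_of_nonneg _ _ (by norm_num) (by norm_num)]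
      norm_num
    have e1 : (∫⁻ x, (K y x ^ (1/2:ℝ)) ^ (2:ℝ)) = ∫⁻ x, K y x := lintegral_congr fun x => hpow _
    have e2 : (∫⁻ x, (K y x ^ (1/2:ℝ) * f x) ^ (2:ℝ)) = ∫⁻ x, K y x * f x ^ 2 := by
      apply lintegral_congr
      intro x
      rw [ENNReal.mul_rpow_of_nonneg _ _ (by norm_num), hpow, ENNReal.rpow_two]
    rw [e0, e1, e2] at step
    exact step.trans (mul_le_mul_left (ENNReal.rpow_le_rpow (hA y) (by norm_num)) _)
  calc (∫⁻ y, ∫⁻ x, g y * K y x * f x)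
      = ∫⁻ y, g y * ∫⁻ x, K y x * f x := by
        apply lintegral_congr
        intro y
        rw [← lintegral_const_mul _ (show Measurable fun x => K y x * f x from (hKy y).mul hf)]
        apply lintegral_congr
        intro x
        rw [mul_assoc]
    _ ≤ ∫⁻ y, g y * (A ^ (1/2:ℝ) * (∫⁻ x, K y x * f x ^ 2) ^ (1/2:ℝ)) :=
        lintegral_mono fun y => mul_le_mul_right (inner y) _
    _ = A ^ (1/2:ℝ) * ∫⁻ y, g y * (∫⁻ x, K y x * f x ^ 2) ^ (1/2:ℝ) := by
        rw [← lintegral_const_mul _ (show Measurable fun y => g y * (∫⁻ x, K y x * f x ^ 2) ^ (1/2:ℝ) from hg.mul (hHm.pow measurable_const))]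
        apply lintegral_congr
        intro y
        rw [mul_left_comm]
    _ ≤ A ^ (1/2:ℝ) * ((∫⁻ y, g y ^ 2) ^ (1/2:ℝ) * (B * ∫⁻ x, f x ^ 2) ^ (1/2:ℝ)) := by
        apply mul_le_mul_right
        have h1 : Measurable fun y => (∫⁻ x, K y x * f x ^ 2) ^ (1/2:ℝ) := hHm.pow measurable_const
        have step := ENNReal.lintegral_mul_le_Lp_mul_Lq volume hconj hg.aemeasurable h1.aemeasurable
        simp only [Pi.mul_apply] at step
        have e1 : (∫⁻ y, g y ^ (2:ℝ)) = ∫⁻ y, g y ^ 2 := lintegral_congr fun y => ENNReal.rpow_two _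
        have e2 : (∫⁻ y, ((∫⁻ x, K y x * f x ^ 2) ^ (1/2:ℝ)) ^ (2:ℝ)) = ∫⁻ y, ∫⁻ x, K y x * f x ^ 2 :=
          lintegral_congr fun y => hpow _
        rw [e1, e2] at step
        refine step.trans (mul_le_mul_right (ENNReal.rpow_le_rpow ?_ (by norm_num)) _)
        rw [lintegral_lintegral_swap (hK.mul ((hf.comp measurable_snd).pow_const 2)).aemeasurable]
        calc (∫⁻ x, ∫⁻ y, K y x * f x ^ 2)
            = ∫⁻ x, (∫⁻ y, K y x) * f x ^ 2 :=
              lintegral_congr fun x => lintegral_mul_const _ (hKx x)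
          _ ≤ ∫⁻ x, B * f x ^ 2 := lintegral_mono fun x => mul_le_mul_left (hB x) _
          _ = B * ∫⁻ x, f x ^ 2 := lintegral_const_mul _ (hf.pow_const 2)
    _ = A ^ (1/2:ℝ) * B ^ (1/2:ℝ) * (∫⁻ y, g y ^ 2) ^ (1/2:ℝ) * (∫⁻ x, f x ^ 2) ^ (1/2:ℝ) := by
        rw [ENNReal.mul_rpow_of_nonneg _ _ (by norm_num : (0:ℝ) ≤ 1/2)]
        ring

end Schur

end

noncomputable section
open MeasureTheory Real Filter
open scoped ENNReal NNReal BigOperators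

set_option maxHeartbeats 2000000 in
theorem stmt6 (n : ℕ) (hn : 2 ≤ n) (α : Pair n) (Φ : R2 → ℝ) (hΦ : PhiOK Φ) :
    ∃ c : ℝ, 0 < c ∧ ∀ ε : ℝ, 0 < ε → ε ≤ 1 → ∀ t : ℝ, 0 < t →
      ∀ (g : Yesp α → ℝ≥0∞) (f : (Fin n → R2) → ℝ≥0∞), Measurable g → Measurable f →
        (∫⁻ y, ∫⁻ x, g y * ENNReal.ofReal (Real.sqrt (Φ y.1) * G n t (Sea α ε y - x)) * f x) ≤
          ENNReal.ofReal (c * t ^ (-(1/2) : ℝ)) *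
            (∫⁻ y, (g y) ^ 2) ^ (1/2 : ℝ) * (∫⁻ x, (f x) ^ 2) ^ (1/2 : ℝ) := by
  classical
  obtain ⟨hΦc', hΦcs, hΦ0, hΦ1⟩ := hΦ
  have hΦc : Continuous Φ := hΦc'.continuous
  have hsΦc : Continuous fun z : R2 => Real.sqrt (Φ z) := Real.continuous_sqrt.comp hΦc
  have hsΦcs : HasCompactSupport fun z : R2 => Real.sqrt (Φ z) :=
    hΦcs.comp_left Real.sqrt_zero
  obtain ⟨z0, hz0⟩ := hsΦc.exists_forall_ge_of_hasCompactSupport hsΦcs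
  have hM0 : 0 ≤ Real.sqrt (Φ z0) := Real.sqrt_nonneg _
  have hsΦint : Integrable fun z : R2 => Real.sqrt (Φ z) :=
    hsΦc.integrable_of_hasCompactSupport hsΦcs
  have hC10 : 0 ≤ ∫ z : R2, Real.sqrt (Φ z) := integral_nonneg fun z => Real.sqrt_nonneg _
  have hlintsΦ : ∫⁻ z : R2, ENNReal.ofReal (Real.sqrt (Φ z))
      = ENNReal.ofReal (∫ z : R2, Real.sqrt (Φ z)) :=
    (ofReal_integral_eq_lintegral_ofReal hsΦint (ae_of_all _ fun z => Real.sqrt_nonneg _)).symm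
  refine ⟨Real.sqrt (Real.sqrt (Φ z0) * ((∫ z : R2, Real.sqrt (Φ z)) / (2 * π))) + 1,
    by positivity, ?_⟩
  intro ε hε hε1 t ht g f hg hf
  have hij : α.1.1 ≠ α.1.2 := ne_of_lt α.2
  have h2πt : (0:ℝ) < 2 * π * t := by positivity
  -- continuity and measurability of the kernel
  have hSeaCont : Continuous (Sea α ε) := by
    apply continuous_pi
    intro k
    unfold Sea
    by_cases h : k ≠ α.1.1 ∧ k ≠ α.1.2
    · simp only [dif_pos h]; fun_prop
    · simp only [dif_neg h]
      by_cases h2 : k = α.1.1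
      · simp only [if_pos h2]; fun_prop
      · simp only [if_neg h2]; fun_prop
  have hGcont : Continuous (G n t) := by
    unfold G
    exact continuous_finset_prod _ fun i _ => (hk_cont t).comp (continuous_apply i)
  have hKm : Measurable (Function.uncurry fun (y : Yesp α) (x : Fin n → R2) =>
      ENNReal.ofReal (Real.sqrt (Φ y.1) * G n t (Sea α ε y - x))) := by
    apply ENNReal.measurable_ofReal.comp
    apply Continuous.measurable
    exact (hsΦc.comp (continuous_fst.fst)).mul
      (hGcont.comp ((hSeaCont.comp continuous_fst).sub continuous_snd))
  -- values of Sea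
  have hSea_1 : ∀ y : Yesp α, Sea α ε y α.1.1 = y.2.1 + (ε / 2) • y.1 := by
    intro y
    unfold Sea
    rw [dif_neg (by simp), if_pos rfl]
  have hSea_2 : ∀ y : Yesp α, Sea α ε y α.1.2 = y.2.1 - (ε / 2) • y.1 := by
    intro y
    unfold Sea
    rw [dif_neg (by simp), if_neg hij.symm]
  have hSea_k : ∀ (y : Yesp α) (k : Fin n) (h : k ≠ α.1.1 ∧ k ≠ α.1.2),
      Sea α ε y k = y.2.2 ⟨k, h⟩ := by
    intro y k h
    unfold Sea
    rw [dif_pos h]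
  have hGsplit : ∀ w x : Fin n → R2, G n t (w - x) = ∏ i, hk t (w i - x i) := fun w x => rfl
  -- row bound
  have hA : ∀ y : Yesp α,
      (∫⁻ x : Fin n → R2, ENNReal.ofReal (Real.sqrt (Φ y.1) * G n t (Sea α ε y - x)))
        ≤ ENNReal.ofReal (Real.sqrt (Φ z0)) := by
    intro y
    have e1 : ∀ x : Fin n → R2, ENNReal.ofReal (Real.sqrt (Φ y.1) * G n t (Sea α ε y - x)) =
        ENNReal.ofReal (Real.sqrt (Φ y.1)) *
          ∏ i, ENNReal.ofReal (hk t (Sea α ε y i - x i)) := by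
      intro x
      rw [hGsplit, ENNReal.ofReal_mul (Real.sqrt_nonneg _),
        ENNReal.ofReal_prod_of_nonneg (fun i _ => hk_nonneg ht _)]
    simp_rw [e1]
    rw [lintegral_const_mul _ (show Measurable fun x : Fin n → R2 =>
      ∏ i, ENNReal.ofReal (hk t (Sea α ε y i - x i)) from Finset.measurable_prod _ fun i _ =>
      (hk_meas t).comp (measurable_const.sub (measurable_pi_apply i)))]
    rw [my_lintegral_fintype_prod (f := fun (i : Fin n) (z : R2) =>
      ENNReal.ofReal (hk t (Sea α ε y i - z)))
      (fun i => (hk_meas t).comp (measurable_const.sub measurable_id))]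
    rw [Finset.prod_congr rfl fun i _ => lint_hk_sub' ht (Sea α ε y i),
      Finset.prod_const_one, mul_one]
    exact ENNReal.ofReal_le_ofReal (hz0 y.1)
  -- column pointwise bound
  have hBpt : ∀ (x : Fin n → R2) (y : Yesp α),
      ENNReal.ofReal (Real.sqrt (Φ y.1) * G n t (Sea α ε y - x)) ≤
        ENNReal.ofReal ((2 * π * t)⁻¹) * (ENNReal.ofReal (Real.sqrt (Φ y.1)) *
          (ENNReal.ofReal (hk t (y.2.1 - (ε / 2) • y.1 - x α.1.2)) *
            ∏ k : outIdx α, ENNReal.ofReal (hk t (y.2.2 k - x k.1)))) := by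
    intro x y
    have hGx : G n t (Sea α ε y - x) = hk t (Sea α ε y α.1.1 - x α.1.1) *
        (hk t (y.2.1 - (ε / 2) • y.1 - x α.1.2) *
          ∏ k : outIdx α, hk t (y.2.2 k - x k.1)) := by
      rw [hGsplit, ← Finset.mul_prod_erase Finset.univ _ (Finset.mem_univ α.1.1)]
      congr 1
      rw [← Finset.mul_prod_erase _ _
        (Finset.mem_erase.2 ⟨hij.symm, Finset.mem_univ α.1.2⟩)]
      congr 1
      · rw [hSea_2]
      · rw [Finset.prod_subtype ((Finset.univ.erase α.1.1).erase α.1.2)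
          (p := fun m : Fin n => m ≠ α.1.1 ∧ m ≠ α.1.2)
          (fun m => by simp only [Finset.mem_erase, Finset.mem_univ, and_true]; tauto)
          (fun m => hk t (Sea α ε y m - x m))]
        exact Finset.prod_congr rfl fun k _ => by rw [hSea_k y k.1 k.2]
    have hreal : Real.sqrt (Φ y.1) * G n t (Sea α ε y - x) ≤
        (2 * π * t)⁻¹ * (Real.sqrt (Φ y.1) *
          (hk t (y.2.1 - (ε / 2) • y.1 - x α.1.2) *
            ∏ k : outIdx α, hk t (y.2.2 k - x k.1))) := by
      rw [hGx]
      have hrest : 0 ≤ Real.sqrt (Φ y.1) *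
          (hk t (y.2.1 - (ε / 2) • y.1 - x α.1.2) *
            ∏ k : outIdx α, hk t (y.2.2 k - x k.1)) :=
        mul_nonneg (Real.sqrt_nonneg _) (mul_nonneg (hk_nonneg ht _)
          (Finset.prod_nonneg fun k _ => hk_nonneg ht _))
      calc Real.sqrt (Φ y.1) * (hk t (Sea α ε y α.1.1 - x α.1.1) *
            (hk t (y.2.1 - (ε / 2) • y.1 - x α.1.2) *
              ∏ k : outIdx α, hk t (y.2.2 k - x k.1)))
          = hk t (Sea α ε y α.1.1 - x α.1.1) * (Real.sqrt (Φ y.1) *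
            (hk t (y.2.1 - (ε / 2) • y.1 - x α.1.2) *
              ∏ k : outIdx α, hk t (y.2.2 k - x k.1))) := by ring
        _ ≤ _ := mul_le_mul_of_nonneg_right (hk_le ht _) hrest
    calc ENNReal.ofReal (Real.sqrt (Φ y.1) * G n t (Sea α ε y - x))
        ≤ ENNReal.ofReal ((2 * π * t)⁻¹ * (Real.sqrt (Φ y.1) *
            (hk t (y.2.1 - (ε / 2) • y.1 - x α.1.2) *
              ∏ k : outIdx α, hk t (y.2.2 k - x k.1)))) := ENNReal.ofReal_le_ofReal hreal
      _ = _ := by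
          rw [ENNReal.ofReal_mul (by positivity), ENNReal.ofReal_mul (Real.sqrt_nonneg _),
            ENNReal.ofReal_mul (hk_nonneg ht _),
            ENNReal.ofReal_prod_of_nonneg (fun k _ => hk_nonneg ht _)]
  -- column bound
  have hB : ∀ x : Fin n → R2,
      (∫⁻ y : Yesp α, ENNReal.ofReal (Real.sqrt (Φ y.1) * G n t (Sea α ε y - x)))
        ≤ ENNReal.ofReal ((2 * π * t)⁻¹ * ∫ z : R2, Real.sqrt (Φ z)) := by
    intro x
    have m1 : Measurable fun y : Yesp α => ENNReal.ofReal (Real.sqrt (Φ y.1)) *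
        (ENNReal.ofReal (hk t (y.2.1 - (ε / 2) • y.1 - x α.1.2)) *
          ∏ k : outIdx α, ENNReal.ofReal (hk t (y.2.2 k - x k.1))) := by
      apply Measurable.mul
      · exact (ENNReal.measurable_ofReal.comp hsΦc.measurable).comp measurable_fst
      · apply Measurable.mul
        · exact (hk_meas t).comp (by fun_prop)
        · exact Finset.measurable_prod _ fun k _ => (hk_meas t).comp (by fun_prop)
    have hin : ∀ a : R2, (∫⁻ z : R2 × (outIdx α → R2),
        ENNReal.ofReal (hk t (z.1 - (ε / 2) • a - x α.1.2)) *
          ∏ k : outIdx α, ENNReal.ofReal (hk t (z.2 k - x k.1))) = 1 := by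
      intro a
      rw [Measure.volume_eq_prod, lintegral_prod_mul
        (f := fun z1 : R2 => ENNReal.ofReal (hk t (z1 - (ε / 2) • a - x α.1.2)))
        (g := fun z2 : outIdx α → R2 => ∏ k : outIdx α, ENNReal.ofReal (hk t (z2 k - x k.1)))
        ((hk_meas t).comp (by fun_prop)).aemeasurable
        (Finset.measurable_prod _ fun k _ => (hk_meas t).comp (by fun_prop)).aemeasurable]
      have e1 : (∫⁻ z1 : R2, ENNReal.ofReal (hk t (z1 - (ε / 2) • a - x α.1.2))) = 1 := by
        simp_rw [sub_sub]
        exact lint_hk_sub ht _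
      have e2 : (∫⁻ z2 : outIdx α → R2,
          ∏ k : outIdx α, ENNReal.ofReal (hk t (z2 k - x k.1))) = 1 := by
        rw [my_lintegral_fintype_prod (f := fun (k : outIdx α) (z : R2) =>
          ENNReal.ofReal (hk t (z - x k.1))) (fun k => (hk_meas t).comp (by fun_prop))]
        rw [Finset.prod_congr rfl fun k _ => lint_hk_sub ht (x k.1), Finset.prod_const_one]
      rw [e1, e2, mul_one]
    calc (∫⁻ y : Yesp α, ENNReal.ofReal (Real.sqrt (Φ y.1) * G n t (Sea α ε y - x)))
        ≤ ∫⁻ y : Yesp α, ENNReal.ofReal ((2 * π * t)⁻¹) * (ENNReal.ofReal (Real.sqrt (Φ y.1)) *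
            (ENNReal.ofReal (hk t (y.2.1 - (ε / 2) • y.1 - x α.1.2)) *
              ∏ k : outIdx α, ENNReal.ofReal (hk t (y.2.2 k - x k.1)))) :=
          lintegral_mono (hBpt x)
      _ = ENNReal.ofReal ((2 * π * t)⁻¹) * ∫⁻ y : Yesp α, ENNReal.ofReal (Real.sqrt (Φ y.1)) *
            (ENNReal.ofReal (hk t (y.2.1 - (ε / 2) • y.1 - x α.1.2)) *
              ∏ k : outIdx α, ENNReal.ofReal (hk t (y.2.2 k - x k.1))) :=
          lintegral_const_mul _ m1
      _ = ENNReal.ofReal ((2 * π * t)⁻¹) * ENNReal.ofReal (∫ z : R2, Real.sqrt (Φ z)) := by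
          congr 1
          rw [Measure.volume_eq_prod, lintegral_prod _ m1.aemeasurable]
          have hsec : ∀ a : R2, (∫⁻ z : R2 × (outIdx α → R2),
              ENNReal.ofReal (Real.sqrt (Φ a)) *
                (ENNReal.ofReal (hk t (z.1 - (ε / 2) • a - x α.1.2)) *
                  ∏ k : outIdx α, ENNReal.ofReal (hk t (z.2 k - x k.1))))
              = ENNReal.ofReal (Real.sqrt (Φ a)) := by
            intro a
            rw [lintegral_const_mul _ (by
              apply Measurable.mul
              · exact (hk_meas t).comp (by fun_prop)
              · exact Finset.measurable_prod _ fun k _ => (hk_meas t).comp (by fun_prop)),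
              hin a, mul_one]
          rw [← hlintsΦ]
          exact lintegral_congr fun a => hsec a
      _ = ENNReal.ofReal ((2 * π * t)⁻¹ * ∫ z : R2, Real.sqrt (Φ z)) := by
          rw [← ENNReal.ofReal_mul (by positivity)]
  -- apply the Schur bound
  refine le_trans (schur_bound _ hKm _ _ hA hB g f hg hf) ?_
  refine mul_le_mul_left (mul_le_mul_left ?_ _) _
  -- constant arithmetic
  rw [ENNReal.ofReal_rpow_of_nonneg hM0 (by norm_num),
    ENNReal.ofReal_rpow_of_nonneg (by positivity) (by norm_num),
    ← ENNReal.ofReal_mul (by positivity)]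
  apply ENNReal.ofReal_le_ofReal
  have h1 : Real.sqrt (Φ z0) ^ (1/2:ℝ) * ((2 * π * t)⁻¹ * ∫ z : R2, Real.sqrt (Φ z)) ^ (1/2:ℝ)
      = (Real.sqrt (Φ z0) * ((∫ z : R2, Real.sqrt (Φ z)) / (2 * π))) ^ (1/2:ℝ)
        * t ^ (-(1/2):ℝ) := by
    rw [← Real.mul_rpow hM0 (by positivity)]
    rw [show Real.sqrt (Φ z0) * ((2 * π * t)⁻¹ * ∫ z : R2, Real.sqrt (Φ z))
      = Real.sqrt (Φ z0) * ((∫ z : R2, Real.sqrt (Φ z)) / (2 * π)) * t⁻¹ by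
        rw [mul_inv]; ring]
    rw [Real.mul_rpow (by positivity) (by positivity), Real.inv_rpow ht.le,
      ← Real.rpow_neg ht.le]
  rw [h1]
  apply mul_le_mul_of_nonneg_right _ (Real.rpow_nonneg ht.le _)
  rw [← Real.sqrt_eq_rpow]
  linarith [Real.sqrt_nonneg (Real.sqrt (Φ z0) * ((∫ z : R2, Real.sqrt (Φ z)) / (2 * π)))]


end
end

section
/- There exists c₀ = c₀(Φ) ∈ (0,∞) such that for all ε > 0, all τ > 0, and all f, g ∈ L²(ℝ²): ∫_{ℝ²} ∫_{ℝ²} |g(z)| φ(z) p(2τ, ε(z − z')) φ(z') |f(z')| dz dz' ≤ (4π)^{−1} (τ² + c₀ ε² τ)^{−1/2} ‖g‖_{L²} ‖f‖_{L²}; that is, the integral operator φ h_ε(2τ) φ on L²(ℝ²) with kernel φ(z) p(2τ, ε(z−z')) φ(z') has operator norm at most (4π)^{−1}(τ² + c₀ε²τ)^{−1/2}. -/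
open MeasureTheory Real Filter
open scoped ENNReal NNReal BigOperators

noncomputable section
open MeasureTheory Real Filter
open scoped ENNReal NNReal BigOperators

lemma nrmsq_cont : Continuous nrmsq := by unfold nrmsq; fun_prop

lemma nrmsq_nonneg (x : R2) : 0 ≤ nrmsq x := by unfold nrmsq; positivity

lemma nrmsq_smul (c : ℝ) (u : R2) : nrmsq (c • u) = c ^ 2 * nrmsq u := by
  simp only [nrmsq, Prod.smul_fst, Prod.smul_snd, smul_eq_mul]; ring

lemma nrmsq_sub_le (u v : R2) : nrmsq (u - v) ≤ 2 * nrmsq u + 2 * nrmsq v := by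
  simp only [nrmsq, Prod.fst_sub, Prod.snd_sub]
  nlinarith [sq_nonneg (u.1 + v.1), sq_nonneg (u.2 + v.2)]

/-- Gaussian lintegral on R2. -/
lemma gauss_lint {b : ℝ} (hb : 0 < b) :
    ∫⁻ w : R2, ENNReal.ofReal (Real.exp (-(b * nrmsq w))) = ENNReal.ofReal (π / b) := by
  have h1 : ∀ w : R2, ENNReal.ofReal (Real.exp (-(b * nrmsq w)))
      = ENNReal.ofReal (Real.exp (-b * w.1 ^ 2)) * ENNReal.ofReal (Real.exp (-b * w.2 ^ 2)) := by
    intro w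
    rw [← ENNReal.ofReal_mul (Real.exp_nonneg _), ← Real.exp_add]
    congr 1
    unfold nrmsq; ring
  simp_rw [h1]
  rw [Measure.volume_eq_prod]
  rw [lintegral_prod_mul (f := fun u : ℝ => ENNReal.ofReal (Real.exp (-b * u ^ 2)))
    (g := fun u : ℝ => ENNReal.ofReal (Real.exp (-b * u ^ 2))) (by fun_prop) (by fun_prop)]
  have h2 : ∫⁻ u : ℝ, ENNReal.ofReal (Real.exp (-b * u ^ 2)) = ENNReal.ofReal (√(π / b)) := by
    rw [← ofReal_integral_eq_lintegral_ofReal (integrable_exp_neg_mul_sq hb)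
      (Eventually.of_forall fun u => (Real.exp_pos _).le), integral_gaussian]
  rw [h2, ← ENNReal.ofReal_mul (Real.sqrt_nonneg _), Real.mul_self_sqrt (by positivity)]

/-- e^{-y} + y e^{-Y} ≤ 1 for 0 ≤ y ≤ Y. -/
lemma exp_aux {y Y : ℝ} (hy : 0 ≤ y) (hY : y ≤ Y) :
    Real.exp (-y) + y * Real.exp (-Y) ≤ 1 := by
  have h1 : y * Real.exp (-Y) ≤ y * Real.exp (-y) :=
    mul_le_mul_of_nonneg_left (Real.exp_le_exp.2 (by linarith)) hy
  have h2 : (y + 1) * Real.exp (-y) ≤ Real.exp y * Real.exp (-y) :=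
    mul_le_mul_of_nonneg_right (Real.add_one_le_exp y) (Real.exp_pos _).le
  rw [← Real.exp_add] at h2
  simp at h2
  nlinarith [Real.exp_pos (-y)]

/-- scalar inequality for regime 2. -/
lemma reg2_aux {x c0 κ V : ℝ} (hx : 0 < x)
    (hc0 : 0 < c0) (hc : c0 ≤ κ * V / 2) :
    1 ≤ (1 + c0 * x)⁻¹ + x * κ / 2 * V := by
  have hpos : 0 < 1 + c0 * x := by nlinarith
  have hi1 : (1 + c0 * x)⁻¹ ≤ 1 := by
    rw [inv_le_one_iff₀]; right; nlinarith
  have hic : (1 + c0 * x) * (1 + c0 * x)⁻¹ = 1 := mul_inv_cancel₀ (ne_of_gt hpos)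
  nlinarith [mul_pos hc0 hx, inv_nonneg.2 hpos.le,
    mul_le_of_le_one_right (le_of_lt (mul_pos hc0 hx)) hi1]

/-- product compact support helper. -/
lemma supp_prod_aux {Φ : R2 → ℝ} (hs : HasCompactSupport Φ) (b : R2 × R2 → ℝ) :
    HasCompactSupport (fun p : R2 × R2 => Φ p.1 * b p * Φ p.2) := by
  apply HasCompactSupport.intro (hs.prod hs)
  intro p hp
  rcases not_and_or.1 ((Set.mem_prod).not.1 hp) with h | h <;>
    simp [image_eq_zero_of_notMem_tsupport h]

lemma integrable_aux {Φ : R2 → ℝ} (hc : Continuous Φ) (hs : HasCompactSupport Φ)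
    {b : R2 × R2 → ℝ} (hb : Continuous b) :
    Integrable (fun p : R2 × R2 => Φ p.1 * b p * Φ p.2) :=
  ((hc.comp continuous_fst).mul hb |>.mul (hc.comp continuous_snd)).integrable_of_hasCompactSupport
    (supp_prod_aux hs b)

/-- positivity of the spread functional. -/
lemma Vpos_aux {Φ : R2 → ℝ} (hc : Continuous Φ) (hs : HasCompactSupport Φ)
    (h0 : ∀ x, 0 ≤ Φ x) (h1 : (∫ x : R2, Φ x) = 1) :
    0 < ∫ p : R2 × R2, Φ p.1 * nrmsq (p.1 - p.2) * Φ p.2 := by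
  have hint := integrable_aux hc hs (b := fun p => nrmsq (p.1 - p.2))
    (nrmsq_cont.comp (continuous_fst.sub continuous_snd))
  have hnn : 0 ≤ fun p : R2 × R2 => Φ p.1 * nrmsq (p.1 - p.2) * Φ p.2 := by
    intro p
    exact mul_nonneg (mul_nonneg (h0 _) (nrmsq_nonneg _)) (h0 _)
  rw [integral_pos_iff_support_of_nonneg hnn hint]
  obtain ⟨z₀, hz₀⟩ : ∃ z₀, 0 < Φ z₀ := by
    by_contra h
    push_neg at h
    have : Φ = fun _ => 0 := funext fun z => le_antisymm (h z) (h0 z)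
    rw [this] at h1
    simp at h1
  have hU : IsOpen {z : R2 | 0 < Φ z} := isOpen_lt continuous_const hc
  obtain ⟨r, hr, hball⟩ := Metric.isOpen_iff.1 hU z₀ hz₀
  set z₁ : R2 := z₀ + (r / 2, 0) with hz₁def
  have hz₁mem : z₁ ∈ {z : R2 | 0 < Φ z} := by
    apply hball
    rw [Metric.mem_ball, Prod.dist_eq]
    simp only [hz₁def, Prod.fst_add, Prod.snd_add]
    rw [Real.dist_eq, Real.dist_eq]
    simp only [add_sub_cancel_left]
    rw [abs_of_nonneg (by positivity), abs_zero]
    rw [max_eq_left (by positivity : (0:ℝ) ≤ r / 2)]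
    linarith
  have hz₁ : 0 < Φ z₁ := hz₁mem
  have hWpos : 0 < nrmsq (z₁ - z₀) := by
    simp only [hz₁def, add_sub_cancel_left, nrmsq]
    positivity
  have hUopen : IsOpen {p : R2 × R2 | 0 < Φ p.1 * nrmsq (p.1 - p.2) * Φ p.2} :=
    isOpen_lt continuous_const
      (((hc.comp continuous_fst).mul (nrmsq_cont.comp (continuous_fst.sub continuous_snd))).mul
        (hc.comp continuous_snd))
  have hsub : {p : R2 × R2 | 0 < Φ p.1 * nrmsq (p.1 - p.2) * Φ p.2} ⊆
      Function.support fun p : R2 × R2 => Φ p.1 * nrmsq (p.1 - p.2) * Φ p.2 :=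
    fun p hp => ne_of_gt hp
  have hne : ((z₁, z₀) : R2 × R2) ∈ {p : R2 × R2 | 0 < Φ p.1 * nrmsq (p.1 - p.2) * Φ p.2} := by
    simp only [Set.mem_setOf_eq]
    exact mul_pos (mul_pos hz₁ hWpos) hz₀
  calc (0:ℝ≥0∞) < volume {p : R2 × R2 | 0 < Φ p.1 * nrmsq (p.1 - p.2) * Φ p.2} :=
        hUopen.measure_pos volume ⟨_, hne⟩
    _ ≤ _ := measure_mono hsub

/-- lintegral of ofReal Φ. -/
lemma lint_phi_aux {Φ : R2 → ℝ} (hc : Continuous Φ) (hs : HasCompactSupport Φ)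
    (h0 : ∀ x, 0 ≤ Φ x) (h1 : (∫ x : R2, Φ x) = 1) :
    ∫⁻ z : R2, ENNReal.ofReal (Φ z) = 1 := by
  rw [← ofReal_integral_eq_lintegral_ofReal (hc.integrable_of_hasCompactSupport hs)
    (Eventually.of_forall h0), h1, ENNReal.ofReal_one]

/-- real inequality for regime 1. -/
lemma reg1_aux {τ ε M c0 : ℝ} (hτ : 0 < τ) (hε : 0 < ε) (hM : 0 < M)
    (hx1 : 4 * π * M ≤ ε ^ 2 / τ) (hc0 : c0 ≤ (4 * π * M)⁻¹) (hc0' : 0 < c0) :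
    ((2 * π * (2 * τ))⁻¹) ^ 2 * M * (π / (ε ^ 2 / τ / 2))
      ≤ ((4 * π)⁻¹) ^ 2 * (τ ^ 2 + c0 * ε ^ 2 * τ)⁻¹ := by
  have hπ := Real.pi_pos
  have h4 : 4 * π * M * τ ≤ ε ^ 2 := (le_div_iff₀ hτ).1 hx1
  have h5 : c0 * (4 * π * M) ≤ 1 := by
    have := mul_le_mul_of_nonneg_right hc0 (show (0:ℝ) ≤ 4 * π * M by positivity)
    rwa [inv_mul_cancel₀ (show (4 * π * M : ℝ) ≠ 0 by positivity)] at this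
  have hL : ((2 * π * (2 * τ))⁻¹) ^ 2 * M * (π / (ε ^ 2 / τ / 2)) = M / (8 * π * τ * ε ^ 2) := by
    field_simp
    ring
  have hy : (0:ℝ) < τ ^ 2 + c0 * ε ^ 2 * τ := by positivity
  have hR : ((4 * π)⁻¹) ^ 2 * (τ ^ 2 + c0 * ε ^ 2 * τ)⁻¹
      = 1 / (16 * π ^ 2 * (τ ^ 2 + c0 * ε ^ 2 * τ)) := by
    rw [inv_pow, ← mul_inv, one_div]
    congr 2
    ring
  rw [hL, hR, div_le_div_iff₀ (by positivity) (by positivity)]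
  have k1 : 16 * π ^ 2 * M * τ ^ 2 ≤ 4 * π * τ * ε ^ 2 := by
    nlinarith [mul_le_mul_of_nonneg_right h4 (show (0:ℝ) ≤ 4 * π * τ by positivity)]
  have k2 : 16 * π ^ 2 * M * (c0 * ε ^ 2 * τ) ≤ 4 * π * (ε ^ 2 * τ) := by
    nlinarith [mul_le_mul_of_nonneg_right h5 (show (0:ℝ) ≤ 4 * π * (ε ^ 2 * τ) by positivity)]
  nlinarith

/-- pointwise inequality for regime 2. -/
lemma pt2_aux {Φ : R2 → ℝ} (h0 : ∀ z, 0 ≤ Φ z) {R x x₁ c4 : ℝ}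
    (hR : ∀ z ∈ tsupport Φ, nrmsq z ≤ R) (hx : 0 ≤ x) (hxx : x ≤ x₁) (hc4 : 0 ≤ c4)
    (p : R2 × R2) :
    Φ p.1 * (c4 * Real.exp (-(x / 2 * nrmsq (p.1 - p.2)))) * Φ p.2
      + c4 * (x * Real.exp (-(2 * R * x₁)) / 2) * (Φ p.1 * nrmsq (p.1 - p.2) * Φ p.2)
      ≤ c4 * (Φ p.1 * Φ p.2) := by
  by_cases h1 : Φ p.1 = 0
  · simp [h1]
  by_cases h2 : Φ p.2 = 0
  · simp [h2]
  have hm1 : p.1 ∈ tsupport Φ := subset_tsupport Φ h1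
  have hm2 : p.2 ∈ tsupport Φ := subset_tsupport Φ h2
  have hR0 : 0 ≤ R := le_trans (nrmsq_nonneg p.1) (hR _ hm1)
  have hW0 : 0 ≤ nrmsq (p.1 - p.2) := nrmsq_nonneg _
  have hW4 : nrmsq (p.1 - p.2) ≤ 4 * R := by
    have := nrmsq_sub_le p.1 p.2
    nlinarith [hR _ hm1, hR _ hm2]
  have hy : 0 ≤ x / 2 * nrmsq (p.1 - p.2) := by positivity
  have hyY : x / 2 * nrmsq (p.1 - p.2) ≤ 2 * R * x₁ := by nlinarith
  have hexp := exp_aux hy hyY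
  have hfac : 0 ≤ c4 * (Φ p.1 * Φ p.2) := by
    have := h0 p.1; have := h0 p.2; positivity
  calc Φ p.1 * (c4 * Real.exp (-(x / 2 * nrmsq (p.1 - p.2)))) * Φ p.2
        + c4 * (x * Real.exp (-(2 * R * x₁)) / 2) * (Φ p.1 * nrmsq (p.1 - p.2) * Φ p.2)
      = c4 * (Φ p.1 * Φ p.2) * (Real.exp (-(x / 2 * nrmsq (p.1 - p.2)))
          + x / 2 * nrmsq (p.1 - p.2) * Real.exp (-(2 * R * x₁))) := by ring
    _ ≤ c4 * (Φ p.1 * Φ p.2) * 1 := mul_le_mul_of_nonneg_left hexp hfac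
    _ = c4 * (Φ p.1 * Φ p.2) := mul_one _

/-- real bridge inequality for regime 2. -/
lemma reg2_bridge {τ ε c0 κ V : ℝ} (hτ : 0 < τ) (hε : 0 < ε) (hκ : 0 < κ) (hV : 0 < V)
    (hc0' : 0 < c0) (hc : c0 ≤ κ * V / 2) :
    ((2 * π * (2 * τ))⁻¹) ^ 2 ≤ ((4 * π)⁻¹) ^ 2 * (τ ^ 2 + c0 * ε ^ 2 * τ)⁻¹
      + ((2 * π * (2 * τ))⁻¹) ^ 2 * (ε ^ 2 / τ * κ / 2) * V := by
  have hπ := Real.pi_pos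
  have hx : 0 < ε ^ 2 / τ := by positivity
  have h := reg2_aux hx hc0' hc
  have hkey : ((4 * π)⁻¹) ^ 2 * (τ ^ 2 + c0 * ε ^ 2 * τ)⁻¹
      = ((2 * π * (2 * τ))⁻¹) ^ 2 * (1 + c0 * (ε ^ 2 / τ))⁻¹ := by
    rw [inv_pow, inv_pow, ← mul_inv, ← mul_inv]
    congr 1
    field_simp
    ring
  rw [hkey]
  have hc4 : (0:ℝ) < ((2 * π * (2 * τ))⁻¹) ^ 2 := by positivity
  nlinarith [mul_le_mul_of_nonneg_left h hc4.le]


end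

noncomputable section
open MeasureTheory Real Filter
open scoped ENNReal NNReal BigOperators

theorem stmt10 (Φ : R2 → ℝ) (hΦ : PhiOK Φ) :
    ∃ c0 : ℝ, 0 < c0 ∧ ∀ ε : ℝ, 0 < ε → ∀ τ : ℝ, 0 < τ →
      ∀ g f : R2 → ℝ≥0∞, Measurable g → Measurable f →
        (∫⁻ z, ∫⁻ z', g z * ENNReal.ofReal
            (Real.sqrt (Φ z) * hk (2 * τ) (ε • (z - z')) * Real.sqrt (Φ z')) * f z') ≤
          ENNReal.ofReal ((4 * π)⁻¹ * (τ ^ 2 + c0 * ε ^ 2 * τ) ^ (-(1/2) : ℝ)) *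
            (∫⁻ z, (g z) ^ 2) ^ (1/2 : ℝ) * (∫⁻ z', (f z') ^ 2) ^ (1/2 : ℝ) := by
  obtain ⟨hΦsm, hΦcs, hΦ0, hΦ1⟩ := hΦ
  have hΦc : Continuous Φ := hΦsm.continuous
  have hπ := Real.pi_pos
  obtain ⟨zM, hzM⟩ := hΦc.exists_forall_ge_of_hasCompactSupport hΦcs
  set M : ℝ := Φ zM + 1 with hMdef
  have hM : 0 < M := by have := hΦ0 zM; rw [hMdef]; linarith
  have hMb : ∀ z, Φ z ≤ M := fun z => by have := hzM z; rw [hMdef]; linarith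
  obtain ⟨R, hR⟩ : ∃ R, ∀ z ∈ tsupport Φ, nrmsq z ≤ R := by
    obtain ⟨R, hR⟩ := (hΦcs.image nrmsq_cont).bddAbove
    exact ⟨R, fun z hz => hR (Set.mem_image_of_mem _ hz)⟩
  set V : ℝ := ∫ p : R2 × R2, Φ p.1 * nrmsq (p.1 - p.2) * Φ p.2 with hVdef
  have hV : 0 < V := Vpos_aux hΦc hΦcs hΦ0 hΦ1
  set x₁ : ℝ := 4 * π * M with hx₁def
  have hx₁ : 0 < x₁ := by rw [hx₁def]; positivity
  set κ : ℝ := Real.exp (-(2 * R * x₁)) with hκdef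
  have hκ : 0 < κ := Real.exp_pos _
  set c0 : ℝ := min (κ * V / 2) ((4 * π * M)⁻¹) with hc0def
  have hc0 : 0 < c0 := lt_min (by positivity) (by positivity)
  have hc0a : c0 ≤ κ * V / 2 := min_le_left _ _
  have hc0b : c0 ≤ (4 * π * M)⁻¹ := min_le_right _ _
  refine ⟨c0, hc0, ?_⟩
  intro ε hε τ hτ g f hg hf
  have h2τ : (0:ℝ) < 2 * τ := by linarith
  set c4 : ℝ := ((2 * π * (2 * τ))⁻¹) ^ 2 with hc4def
  have hc4 : 0 < c4 := by rw [hc4def]; positivity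
  set x : ℝ := ε ^ 2 / τ with hxdef
  have hx : 0 < x := by rw [hxdef]; positivity
  have hy : (0:ℝ) < τ ^ 2 + c0 * ε ^ 2 * τ := by positivity
  set C : ℝ := (4 * π)⁻¹ * (τ ^ 2 + c0 * ε ^ 2 * τ) ^ (-(1/2) : ℝ) with hCdef
  have hCnn : 0 ≤ C := by
    rw [hCdef]
    positivity
  have hC2 : C ^ 2 = ((4 * π)⁻¹) ^ 2 * (τ ^ 2 + c0 * ε ^ 2 * τ)⁻¹ := by
    rw [hCdef, mul_pow]
    congr 1
    rw [← Real.rpow_natCast ((τ ^ 2 + c0 * ε ^ 2 * τ) ^ (-(1/2) : ℝ)) 2,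
      ← Real.rpow_mul hy.le]
    norm_num
    exact Real.rpow_neg_one _
  set K : R2 × R2 → ℝ≥0∞ :=
    fun p => ENNReal.ofReal (Real.sqrt (Φ p.1) * hk (2 * τ) (ε • (p.1 - p.2)) * Real.sqrt (Φ p.2))
    with hKdef
  have hhkc : Continuous fun u : R2 => hk (2 * τ) u := by
    unfold hk
    exact continuous_const.mul (Real.continuous_exp.comp ((nrmsq_cont.neg).div_const _))
  have hKrc : Continuous fun p : R2 × R2 =>
      Real.sqrt (Φ p.1) * hk (2 * τ) (ε • (p.1 - p.2)) * Real.sqrt (Φ p.2) :=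
    (((hΦc.comp continuous_fst).sqrt.mul
      (hhkc.comp ((continuous_fst.sub continuous_snd).const_smul ε))).mul
      (hΦc.comp continuous_snd).sqrt)
  have hKm : Measurable K := by
    rw [hKdef]
    exact ENNReal.measurable_ofReal.comp hKrc.measurable
  have hk0 : ∀ u : R2, 0 ≤ hk (2 * τ) u := by
    intro u
    unfold hk
    positivity
  have hkr : ∀ u : R2, (hk (2 * τ) (ε • u)) ^ 2 = c4 * Real.exp (-(x / 2 * nrmsq u)) := by
    intro u
    unfold hk
    rw [mul_pow, sq (Real.exp _), ← Real.exp_add]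
    congr 1
    rw [nrmsq_smul, hxdef]
    field_simp
    ring
  have hK2 : ∀ p : R2 × R2, K p ^ 2
      = ENNReal.ofReal (Φ p.1 * (c4 * Real.exp (-(x / 2 * nrmsq (p.1 - p.2)))) * Φ p.2) := by
    intro p
    rw [hKdef]
    rw [← ENNReal.ofReal_pow (mul_nonneg (mul_nonneg (Real.sqrt_nonneg _) (hk0 _))
      (Real.sqrt_nonneg _))]
    congr 1
    have hexpand : (Real.sqrt (Φ p.1) * hk (2 * τ) (ε • (p.1 - p.2)) * Real.sqrt (Φ p.2)) ^ 2
        = Real.sqrt (Φ p.1) ^ 2 * (hk (2 * τ) (ε • (p.1 - p.2))) ^ 2 * Real.sqrt (Φ p.2) ^ 2 := by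
      ring
    rw [hexpand, Real.sq_sqrt (hΦ0 _), Real.sq_sqrt (hΦ0 _), hkr]
  -- the key estimate on the squared kernel
  have hKey : ∫⁻ p : R2 × R2, K p ^ 2 ≤ ENNReal.ofReal (C ^ 2) := by
    simp_rw [hK2]
    have hcontW : Continuous fun p : R2 × R2 => nrmsq (p.1 - p.2) :=
      nrmsq_cont.comp (continuous_fst.sub continuous_snd)
    have hconte : Continuous fun p : R2 × R2 => Real.exp (-(x / 2 * nrmsq (p.1 - p.2))) :=
      Real.continuous_exp.comp (continuous_const.mul hcontW).neg
    have mA : Measurable fun p : R2 × R2 =>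
        ENNReal.ofReal (Φ p.1 * (c4 * Real.exp (-(x / 2 * nrmsq (p.1 - p.2)))) * Φ p.2) :=
      ENNReal.measurable_ofReal.comp
        (((hΦc.comp continuous_fst).mul (continuous_const.mul hconte)).mul
          (hΦc.comp continuous_snd)).measurable
    have mB : Measurable fun p : R2 × R2 =>
        ENNReal.ofReal (Φ p.1 * nrmsq (p.1 - p.2) * Φ p.2) :=
      ENNReal.measurable_ofReal.comp
        (((hΦc.comp continuous_fst).mul hcontW).mul (hΦc.comp continuous_snd)).measurable
    have mΦ : Measurable fun z : R2 => ENNReal.ofReal (Φ z) :=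
      ENNReal.measurable_ofReal.comp hΦc.measurable
    have hFm : Measurable fun w : R2 => ENNReal.ofReal (Real.exp (-(x / 2 * nrmsq w))) :=
      ENNReal.measurable_ofReal.comp
        (Real.continuous_exp.comp (continuous_const.mul nrmsq_cont).neg).measurable
    rcases le_total x x₁ with hxx | hxx
    · -- regime 2 : x ≤ x₁
      have hWint : Integrable (fun p : R2 × R2 => Φ p.1 * nrmsq (p.1 - p.2) * Φ p.2) :=
        integrable_aux hΦc hΦcs hcontW
      have hWl : ∫⁻ p : R2 × R2, ENNReal.ofReal (Φ p.1 * nrmsq (p.1 - p.2) * Φ p.2)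
          = ENNReal.ofReal V := by
        rw [← ofReal_integral_eq_lintegral_ofReal hWint (Eventually.of_forall fun p =>
          mul_nonneg (mul_nonneg (hΦ0 _) (nrmsq_nonneg _)) (hΦ0 _))]
      have hΦΦ : ∫⁻ p : R2 × R2, ENNReal.ofReal (Φ p.1) * ENNReal.ofReal (Φ p.2) = 1 := by
        rw [Measure.volume_eq_prod R2 R2, lintegral_prod_mul mΦ.aemeasurable mΦ.aemeasurable,
          lint_phi_aux hΦc hΦcs hΦ0 hΦ1, one_mul]
      have hpt : ∀ p : R2 × R2,
          ENNReal.ofReal (Φ p.1 * (c4 * Real.exp (-(x / 2 * nrmsq (p.1 - p.2)))) * Φ p.2)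
            + ENNReal.ofReal (c4 * (x * κ / 2))
              * ENNReal.ofReal (Φ p.1 * nrmsq (p.1 - p.2) * Φ p.2)
          ≤ ENNReal.ofReal c4 * (ENNReal.ofReal (Φ p.1) * ENNReal.ofReal (Φ p.2)) := by
        intro p
        have hq0 : (0:ℝ) ≤ c4 * (x * κ / 2) :=
          mul_nonneg hc4.le (div_nonneg (mul_nonneg hx.le hκ.le) (by norm_num))
        have hA0 : (0:ℝ) ≤ Φ p.1 * (c4 * Real.exp (-(x / 2 * nrmsq (p.1 - p.2)))) * Φ p.2 :=
          mul_nonneg (mul_nonneg (hΦ0 _) (mul_nonneg hc4.le (Real.exp_pos _).le)) (hΦ0 _)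
        have hB0 : (0:ℝ) ≤ Φ p.1 * nrmsq (p.1 - p.2) * Φ p.2 :=
          mul_nonneg (mul_nonneg (hΦ0 _) (nrmsq_nonneg _)) (hΦ0 _)
        rw [← ENNReal.ofReal_mul (hΦ0 _), ← ENNReal.ofReal_mul hc4.le,
          ← ENNReal.ofReal_mul hq0, ← ENNReal.ofReal_add hA0 (mul_nonneg hq0 hB0)]
        apply ENNReal.ofReal_le_ofReal
        have := pt2_aux hΦ0 hR hx.le hxx hc4.le p
        rw [← hκdef] at this
        calc Φ p.1 * (c4 * Real.exp (-(x / 2 * nrmsq (p.1 - p.2)))) * Φ p.2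
              + c4 * (x * κ / 2) * (Φ p.1 * nrmsq (p.1 - p.2) * Φ p.2)
            ≤ c4 * (Φ p.1 * Φ p.2) := this
          _ = c4 * (Φ p.1 * Φ p.2) := rfl
      have mΦ2 : Measurable fun p : R2 × R2 => ENNReal.ofReal (Φ p.1) * ENNReal.ofReal (Φ p.2) :=
        (mΦ.comp measurable_fst).mul (mΦ.comp measurable_snd)
      have hsum := lintegral_mono (μ := (volume : Measure (R2 × R2))) hpt
      rw [lintegral_add_left mA, lintegral_const_mul _ mB,
        lintegral_const_mul _ mΦ2, hWl, hΦΦ, mul_one] at hsum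
      have hend : ENNReal.ofReal c4
          ≤ ENNReal.ofReal (C ^ 2) + ENNReal.ofReal (c4 * (x * κ / 2)) * ENNReal.ofReal V := by
        have hq0 : (0:ℝ) ≤ c4 * (x * κ / 2) :=
          mul_nonneg hc4.le (div_nonneg (mul_nonneg hx.le hκ.le) (by norm_num))
        rw [← ENNReal.ofReal_mul hq0,
          ← ENNReal.ofReal_add (sq_nonneg C) (mul_nonneg hq0 hV.le)]
        apply ENNReal.ofReal_le_ofReal
        rw [hC2, hc4def, hxdef, hκdef]
        have hb := reg2_bridge (τ := τ) (ε := ε) hτ hε hκ hV hc0 hc0a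
        rw [hκdef] at hb
        calc ((2 * π * (2 * τ))⁻¹) ^ 2
            ≤ ((4 * π)⁻¹) ^ 2 * (τ ^ 2 + c0 * ε ^ 2 * τ)⁻¹
              + ((2 * π * (2 * τ))⁻¹) ^ 2 * (ε ^ 2 / τ * Real.exp (-(2 * R * x₁)) / 2) * V := hb
          _ = ((4 * π)⁻¹) ^ 2 * (τ ^ 2 + c0 * ε ^ 2 * τ)⁻¹
              + ((2 * π * (2 * τ))⁻¹) ^ 2 * (ε ^ 2 / τ * Real.exp (-(2 * R * x₁)) / 2) * V := rfl
      have hP : ENNReal.ofReal (c4 * (x * κ / 2)) * ENNReal.ofReal V ≠ ⊤ :=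
        ENNReal.mul_ne_top ENNReal.ofReal_ne_top ENNReal.ofReal_ne_top
      exact (ENNReal.add_le_add_iff_right hP).1 (le_trans hsum hend)
    · -- regime 1 : x₁ ≤ x
      have htrans : ∀ z : R2, (∫⁻ z' : R2, ENNReal.ofReal (Real.exp (-(x / 2 * nrmsq (z - z')))))
          = ENNReal.ofReal (π / (x / 2)) := by
        intro z
        rw [← gauss_lint (show (0:ℝ) < x / 2 by positivity)]
        exact (Measure.measurePreserving_sub_left volume z).lintegral_comp hFm
      have hmono : ∫⁻ p : R2 × R2,
          ENNReal.ofReal (Φ p.1 * (c4 * Real.exp (-(x / 2 * nrmsq (p.1 - p.2)))) * Φ p.2)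
          ≤ ∫⁻ p : R2 × R2, (ENNReal.ofReal (Φ p.1) * ENNReal.ofReal (c4 * M))
              * ENNReal.ofReal (Real.exp (-(x / 2 * nrmsq (p.1 - p.2)))) := by
        apply lintegral_mono
        intro p
        dsimp only
        rw [← ENNReal.ofReal_mul (hΦ0 _), ← ENNReal.ofReal_mul
          (mul_nonneg (hΦ0 _) (mul_nonneg hc4.le hM.le))]
        apply ENNReal.ofReal_le_ofReal
        have he : (0:ℝ) ≤ Real.exp (-(x / 2 * nrmsq (p.1 - p.2))) := (Real.exp_pos _).le
        nlinarith [mul_le_mul_of_nonneg_left (hMb p.2)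
          (mul_nonneg (mul_nonneg (hΦ0 p.1) hc4.le) he)]
      have hsplit : ∫⁻ p : R2 × R2, (ENNReal.ofReal (Φ p.1) * ENNReal.ofReal (c4 * M))
            * ENNReal.ofReal (Real.exp (-(x / 2 * nrmsq (p.1 - p.2))))
          = ENNReal.ofReal (c4 * M) * ENNReal.ofReal (π / (x / 2)) := by
        have mE : Measurable fun p : R2 × R2 => ENNReal.ofReal (Φ p.1) * ENNReal.ofReal (c4 * M)
            * ENNReal.ofReal (Real.exp (-(x / 2 * nrmsq (p.1 - p.2)))) :=
          ((mΦ.comp measurable_fst).mul measurable_const).mul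
            (hFm.comp (measurable_fst.sub measurable_snd))
        rw [Measure.volume_eq_prod R2 R2, lintegral_prod _ mE.aemeasurable]
        have hin : ∀ z : R2, (∫⁻ z' : R2, (ENNReal.ofReal (Φ z) * ENNReal.ofReal (c4 * M))
              * ENNReal.ofReal (Real.exp (-(x / 2 * nrmsq (z - z')))))
            = ENNReal.ofReal (Φ z) * (ENNReal.ofReal (c4 * M) * ENNReal.ofReal (π / (x / 2))) := by
          intro z
          have mz : Measurable fun z' : R2 =>
              ENNReal.ofReal (Real.exp (-(x / 2 * nrmsq (z - z')))) :=
            hFm.comp (measurable_const.sub measurable_id)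
          rw [lintegral_const_mul _ mz, htrans z, mul_assoc]
        simp_rw [hin]
        rw [lintegral_mul_const _ mΦ, lint_phi_aux hΦc hΦcs hΦ0 hΦ1, one_mul]
      calc ∫⁻ p : R2 × R2,
            ENNReal.ofReal (Φ p.1 * (c4 * Real.exp (-(x / 2 * nrmsq (p.1 - p.2)))) * Φ p.2)
          ≤ ENNReal.ofReal (c4 * M) * ENNReal.ofReal (π / (x / 2)) := le_of_le_of_eq hmono hsplit
        _ ≤ ENNReal.ofReal (C ^ 2) := by
            rw [← ENNReal.ofReal_mul (mul_nonneg hc4.le hM.le)]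
            apply ENNReal.ofReal_le_ofReal
            rw [hC2, hc4def, hxdef]
            rw [hx₁def, hxdef] at hxx
            exact reg1_aux hτ hε hM hxx hc0b hc0
  -- main chain
  have hmeas1 : Measurable fun p : R2 × R2 => g p.1 * K p * f p.2 :=
    ((hg.comp measurable_fst).mul hKm).mul (hf.comp measurable_snd)
  have hgoal_eq : (∫⁻ p : R2 × R2, g p.1 * K p * f p.2)
      = ∫⁻ z, ∫⁻ z', g z * ENNReal.ofReal
        (Real.sqrt (Φ z) * hk (2 * τ) (ε • (z - z')) * Real.sqrt (Φ z')) * f z' := by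
    rw [Measure.volume_eq_prod R2 R2, lintegral_prod _ hmeas1.aemeasurable]
  rw [← hgoal_eq]
  have hpow : ∀ a : ℝ≥0∞, a ^ (2:ℝ) = a ^ (2:ℕ) := fun a => by
    rw [← ENNReal.rpow_natCast a 2]
    norm_num
  have hhalf : (∫⁻ p : R2 × R2, K p ^ (2:ℝ)) ^ (1/2 : ℝ) ≤ ENNReal.ofReal C := by
    simp_rw [hpow]
    calc (∫⁻ p : R2 × R2, K p ^ (2:ℕ)) ^ (1/2 : ℝ)
        ≤ (ENNReal.ofReal (C ^ 2)) ^ (1/2 : ℝ) := ENNReal.rpow_le_rpow hKey (by norm_num)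
      _ = ENNReal.ofReal ((C ^ 2) ^ (1/2 : ℝ)) :=
          ENNReal.ofReal_rpow_of_nonneg (by positivity) (by norm_num)
      _ = ENNReal.ofReal C := by
          rw [← Real.rpow_natCast C 2, ← Real.rpow_mul hCnn]
          norm_num
  calc ∫⁻ p : R2 × R2, g p.1 * K p * f p.2
      = ∫⁻ p : R2 × R2, (g p.1 * f p.2) * K p := by
        congr 1
        funext p
        ring
    _ ≤ (∫⁻ p : R2 × R2, (g p.1 * f p.2) ^ (2:ℝ)) ^ (1/2 : ℝ)
        * (∫⁻ p : R2 × R2, K p ^ (2:ℝ)) ^ (1/2 : ℝ) :=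
        ENNReal.lintegral_mul_le_Lp_mul_Lq volume (by constructor <;> norm_num)
          (((hg.comp measurable_fst).mul (hf.comp measurable_snd)).aemeasurable)
          hKm.aemeasurable
    _ = ((∫⁻ z, (g z) ^ 2) * (∫⁻ z', (f z') ^ 2)) ^ (1/2 : ℝ)
        * (∫⁻ p : R2 × R2, K p ^ (2:ℝ)) ^ (1/2 : ℝ) := by
        congr 2
        simp_rw [ENNReal.mul_rpow_of_nonneg _ _ (by norm_num : (0:ℝ) ≤ 2), hpow]
        rw [Measure.volume_eq_prod]
        exact lintegral_prod_mul (hg.pow_const 2).aemeasurable (hf.pow_const 2).aemeasurable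
    _ = (∫⁻ z, (g z) ^ 2) ^ (1/2 : ℝ) * (∫⁻ z', (f z') ^ 2) ^ (1/2 : ℝ)
        * (∫⁻ p : R2 × R2, K p ^ (2:ℝ)) ^ (1/2 : ℝ) := by
        rw [ENNReal.mul_rpow_of_nonneg _ _ (by norm_num : (0:ℝ) ≤ 1/2)]
    _ ≤ (∫⁻ z, (g z) ^ 2) ^ (1/2 : ℝ) * (∫⁻ z', (f z') ^ 2) ^ (1/2 : ℝ) * ENNReal.ofReal C :=
        mul_le_mul_right hhalf _
    _ = ENNReal.ofReal C * (∫⁻ z, (g z) ^ 2) ^ (1/2 : ℝ) * (∫⁻ z', (f z') ^ 2) ^ (1/2 : ℝ) := by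
        ring
end
end

section
/- Fix θ ∈ ℝ, Φ as above, and c₀ ∈ (0,∞). There exist ε₀ ∈ (0,1) and c ∈ (0,∞), depending only on θ, Φ, c₀, such that for every ε ∈ (0,ε₀] and every t with 0 < t ≤ c₀ ε²: B_ε(t) ≤ c t^{−1} (log t)^{−2}. -/
open MeasureTheory Real Filter
open scoped ENNReal NNReal BigOperators

noncomputable section
open MeasureTheory Real Filter
open scoped ENNReal NNReal BigOperators

lemma simpInt_zero' (t : ℝ) (f : (Fin 0 → ℝ) → ℝ≥0∞) :
    simpInt 0 t f = if t = 0 then f (fun i => i.elim0) else 0 := rfl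

lemma simpInt_one' (t : ℝ) (f : (Fin 1 → ℝ) → ℝ≥0∞) :
    simpInt 1 t f = if 0 < t then f (fun _ => t) else 0 := rfl

lemma simpInt_succ' (k : ℕ) (t : ℝ) (f : (Fin (k+2) → ℝ) → ℝ≥0∞) :
    simpInt (k+2) t f
      = ∫⁻ τ in Set.Ioo 0 t, simpInt (k+1) (t - τ) (fun v => f (Fin.cons τ v)) := rfl

lemma simpInt_mono : ∀ (k : ℕ) (t : ℝ) (f g : (Fin k → ℝ) → ℝ≥0∞),
    (∀ τ, (∀ i, 0 < τ i) → f τ ≤ g τ) → simpInt k t f ≤ simpInt k t g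
  | 0, t, f, g, h => by
    rw [simpInt_zero', simpInt_zero']
    split
    · exact h _ (fun i => i.elim0)
    · exact le_rfl
  | 1, t, f, g, h => by
    rw [simpInt_one', simpInt_one']
    split
    · next ht => exact h _ (fun _ => ht)
    · exact le_rfl
  | (k+2), t, f, g, h => by
    rw [simpInt_succ', simpInt_succ']
    refine MeasureTheory.setLIntegral_mono' measurableSet_Ioo (fun τ hτ => ?_)
    refine simpInt_mono (k+1) (t-τ) _ _ (fun v hv => h _ ?_)
    intro i
    refine Fin.cases ?_ ?_ i
    · simpa using hτ.1
    · intro j; simpa using hv j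

lemma simpInt_const_mul : ∀ (k : ℕ) (t : ℝ) (c : ℝ≥0∞), c ≠ ∞ → ∀ (f : (Fin k → ℝ) → ℝ≥0∞),
    simpInt k t (fun τ => c * f τ) = c * simpInt k t f
  | 0, t, c, hc, f => by
    rw [simpInt_zero', simpInt_zero']; split <;> simp
  | 1, t, c, hc, f => by
    rw [simpInt_one', simpInt_one']; split <;> simp
  | (k+2), t, c, hc, f => by
    rw [simpInt_succ', simpInt_succ', ← MeasureTheory.lintegral_const_mul' c _ hc]
    exact MeasureTheory.lintegral_congr (fun τ => simpInt_const_mul (k+1) (t-τ) c hc _)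

lemma lint_Ioo_eq (a b : ℝ) (hab : a ≤ b) (f : ℝ → ℝ)
    (hf : IntervalIntegrable f volume a b) (h0 : ∀ x ∈ Set.Ioo a b, 0 ≤ f x) :
    ∫⁻ x in Set.Ioo a b, ENNReal.ofReal (f x) = ENNReal.ofReal (∫ x in a..b, f x) := by
  rw [intervalIntegral.integral_of_le hab, MeasureTheory.integral_Ioc_eq_integral_Ioo,
    MeasureTheory.ofReal_integral_eq_lintegral_ofReal
      ((intervalIntegrable_iff_integrableOn_Ioo_of_le hab).1 hf)
      ((MeasureTheory.ae_restrict_iff' measurableSet_Ioo).2 (Filter.Eventually.of_forall h0))]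

lemma lint_rpow (s : ℝ) (hs : 0 < s) :
    ∫⁻ x in Set.Ioo 0 s, ENNReal.ofReal (x ^ (-(1/2) : ℝ))
      = ENNReal.ofReal (2 * s ^ ((1:ℝ)/2)) := by
  rw [lint_Ioo_eq 0 s hs.le _ (intervalIntegral.intervalIntegrable_rpow' (by norm_num))
      (fun x hx => Real.rpow_nonneg hx.1.le _)]
  congr 1
  rw [integral_rpow (Or.inl (by norm_num))]
  have h1 : (-(1/2:ℝ) + 1) = 1/2 := by norm_num
  rw [h1, Real.zero_rpow (by norm_num : (1/2:ℝ) ≠ 0)]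
  ring

lemma lint_rpow_sub (t c : ℝ) (hc : 0 < c) (hct : c < t) :
    ∫⁻ x in Set.Ioo c t, ENNReal.ofReal ((t - x) ^ (-(1/2) : ℝ))
      = ENNReal.ofReal (2 * (t - c) ^ ((1:ℝ)/2)) := by
  have hint : IntervalIntegrable (fun x => (t - x) ^ (-(1/2) : ℝ)) volume c t := by
    have h := (intervalIntegral.intervalIntegrable_rpow'
      (by norm_num : (-1:ℝ) < -(1/2)) (a := 0) (b := t - c)).comp_sub_left t
    simpa using h.symm
  rw [lint_Ioo_eq c t (by linarith) _ hint
      (fun x hx => Real.rpow_nonneg (by linarith [hx.2]) _)]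
  congr 1
  rw [intervalIntegral.integral_comp_sub_left (fun x => x ^ (-(1/2) : ℝ)) t]
  have h2 : t - t = 0 := by ring
  rw [h2, integral_rpow (Or.inl (by norm_num))]
  have h1 : (-(1/2:ℝ) + 1) = 1/2 := by norm_num
  rw [h1, Real.zero_rpow (by norm_num : (1/2:ℝ) ≠ 0)]
  ring
lemma keyF_two (t : ℝ) (ht : 0 < t) :
    (∫⁻ τ in Set.Ioo 0 t,
        ENNReal.ofReal (τ ^ (-(1/2):ℝ)) * ENNReal.ofReal ((t - τ) ^ (-(1/2):ℝ)))
      ≤ ENNReal.ofReal 4 := by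
  have ht2 : 0 < t/2 := by linarith
  have hsub : Set.Ioo (0:ℝ) t ⊆ (Set.Ioo 0 (t/2) ∪ {t/2}) ∪ Set.Ioo (t/2) t := by
    intro x hx
    rcases lt_trichotomy x (t/2) with h | h | h
    · exact Or.inl (Or.inl ⟨hx.1, h⟩)
    · exact Or.inl (Or.inr (by simp [h]))
    · exact Or.inr ⟨h, hx.2⟩
  calc ∫⁻ τ in Set.Ioo 0 t,
        ENNReal.ofReal (τ ^ (-(1/2):ℝ)) * ENNReal.ofReal ((t - τ) ^ (-(1/2):ℝ))
      ≤ ∫⁻ τ in (Set.Ioo 0 (t/2) ∪ {t/2}) ∪ Set.Ioo (t/2) t,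
        ENNReal.ofReal (τ ^ (-(1/2):ℝ)) * ENNReal.ofReal ((t - τ) ^ (-(1/2):ℝ)) :=
        MeasureTheory.lintegral_mono_set hsub
    _ ≤ (∫⁻ τ in Set.Ioo 0 (t/2) ∪ {t/2},
          ENNReal.ofReal (τ ^ (-(1/2):ℝ)) * ENNReal.ofReal ((t - τ) ^ (-(1/2):ℝ)))
        + ∫⁻ τ in Set.Ioo (t/2) t,
          ENNReal.ofReal (τ ^ (-(1/2):ℝ)) * ENNReal.ofReal ((t - τ) ^ (-(1/2):ℝ)) :=
        MeasureTheory.lintegral_union_le _ _ _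
    _ ≤ ((∫⁻ τ in Set.Ioo 0 (t/2),
          ENNReal.ofReal (τ ^ (-(1/2):ℝ)) * ENNReal.ofReal ((t - τ) ^ (-(1/2):ℝ)))
        + ∫⁻ τ in ({t/2} : Set ℝ),
          ENNReal.ofReal (τ ^ (-(1/2):ℝ)) * ENNReal.ofReal ((t - τ) ^ (-(1/2):ℝ)))
        + ∫⁻ τ in Set.Ioo (t/2) t,
          ENNReal.ofReal (τ ^ (-(1/2):ℝ)) * ENNReal.ofReal ((t - τ) ^ (-(1/2):ℝ)) :=
        add_le_add_left (MeasureTheory.lintegral_union_le _ _ _) _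
    _ ≤ (ENNReal.ofReal 2 + 0) + ENNReal.ofReal 2 := ?_
    _ = ENNReal.ofReal 4 := by
        rw [add_zero, ← ENNReal.ofReal_add (by norm_num) (by norm_num)]; norm_num
  have hmid : ∫⁻ τ in ({t/2} : Set ℝ),
      ENNReal.ofReal (τ ^ (-(1/2):ℝ)) * ENNReal.ofReal ((t - τ) ^ (-(1/2):ℝ)) = 0 :=
    MeasureTheory.setLIntegral_measure_zero _ _ (by simp)
  refine add_le_add (add_le_add ?_ hmid.le) ?_
  · calc ∫⁻ τ in Set.Ioo 0 (t/2),
          ENNReal.ofReal (τ ^ (-(1/2):ℝ)) * ENNReal.ofReal ((t - τ) ^ (-(1/2):ℝ))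
        ≤ ∫⁻ τ in Set.Ioo 0 (t/2),
          ENNReal.ofReal (τ ^ (-(1/2):ℝ)) * ENNReal.ofReal ((t/2) ^ (-(1/2):ℝ)) := by
          refine MeasureTheory.setLIntegral_mono' measurableSet_Ioo (fun τ hτ => ?_)
          refine mul_le_mul_right (ENNReal.ofReal_le_ofReal ?_) _
          exact Real.rpow_le_rpow_of_nonpos ht2 (by linarith [hτ.2]) (by norm_num)
      _ = (∫⁻ τ in Set.Ioo 0 (t/2), ENNReal.ofReal (τ ^ (-(1/2):ℝ)))
            * ENNReal.ofReal ((t/2) ^ (-(1/2):ℝ)) :=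
          MeasureTheory.lintegral_mul_const' _ _ ENNReal.ofReal_ne_top
      _ = ENNReal.ofReal (2 * (t/2) ^ ((1:ℝ)/2)) * ENNReal.ofReal ((t/2) ^ (-(1/2):ℝ)) := by
          rw [lint_rpow _ ht2]
      _ = ENNReal.ofReal 2 := by
          rw [← ENNReal.ofReal_mul (by positivity)]
          congr 1
          rw [mul_assoc, ← Real.rpow_add ht2]
          norm_num
  · calc ∫⁻ τ in Set.Ioo (t/2) t,
          ENNReal.ofReal (τ ^ (-(1/2):ℝ)) * ENNReal.ofReal ((t - τ) ^ (-(1/2):ℝ))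
        ≤ ∫⁻ τ in Set.Ioo (t/2) t,
          ENNReal.ofReal ((t/2) ^ (-(1/2):ℝ)) * ENNReal.ofReal ((t - τ) ^ (-(1/2):ℝ)) := by
          refine MeasureTheory.setLIntegral_mono' measurableSet_Ioo (fun τ hτ => ?_)
          refine mul_le_mul_left (ENNReal.ofReal_le_ofReal ?_) _
          exact Real.rpow_le_rpow_of_nonpos ht2 hτ.1.le (by norm_num)
      _ = ENNReal.ofReal ((t/2) ^ (-(1/2):ℝ))
            * ∫⁻ τ in Set.Ioo (t/2) t, ENNReal.ofReal ((t - τ) ^ (-(1/2):ℝ)) :=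
          MeasureTheory.lintegral_const_mul' _ _ ENNReal.ofReal_ne_top
      _ = ENNReal.ofReal ((t/2) ^ (-(1/2):ℝ)) * ENNReal.ofReal (2 * (t - t/2) ^ ((1:ℝ)/2)) := by
          rw [lint_rpow_sub t (t/2) ht2 (by linarith)]
      _ = ENNReal.ofReal 2 := by
          rw [← ENNReal.ofReal_mul (by positivity)]
          congr 1
          have h3 : t - t/2 = t/2 := by ring
          rw [h3, mul_comm, mul_assoc, ← Real.rpow_add ht2]
          norm_num

lemma simpInt_succ_prod (k : ℕ) (t : ℝ) (g : ℝ → ℝ) :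
    simpInt (k+2) t (fun τ => ∏ i, ENNReal.ofReal (g (τ i)))
      = ∫⁻ τ in Set.Ioo 0 t, ENNReal.ofReal (g τ)
          * simpInt (k+1) (t - τ) (fun v => ∏ i, ENNReal.ofReal (g (v i))) := by
  rw [simpInt_succ']
  refine MeasureTheory.lintegral_congr (fun τ => ?_)
  have hfun : (fun v : Fin (k+1) → ℝ =>
        (fun τ' : Fin (k+2) → ℝ => ∏ i, ENNReal.ofReal (g (τ' i))) (Fin.cons τ v))
      = fun v => ENNReal.ofReal (g τ) * ∏ i, ENNReal.ofReal (g (v i)) := by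
    funext v
    simp [Fin.prod_univ_succ]
  rw [hfun, simpInt_const_mul (k+1) (t-τ) _ ENNReal.ofReal_ne_top]

lemma keyF_succ (k : ℕ) : ∀ (t : ℝ), 0 < t →
    simpInt (k+2) t (fun τ => ∏ i, ENNReal.ofReal ((τ i) ^ (-(1/2):ℝ)))
      ≤ ENNReal.ofReal (2^(k+2) * t ^ ((k:ℝ)/2)) := by
  induction k with
  | zero =>
    intro t ht
    rw [show (fun τ : Fin (0+2) → ℝ => ∏ i, ENNReal.ofReal ((τ i) ^ (-(1/2):ℝ)))
        = fun τ => ∏ i, ENNReal.ofReal ((fun x : ℝ => x ^ (-(1/2):ℝ)) (τ i)) from rfl,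
      simpInt_succ_prod 0 t (fun x : ℝ => x ^ (-(1/2):ℝ))]
    refine le_trans (le_trans (MeasureTheory.lintegral_mono (fun τ => ?_)) (keyF_two t ht))
      (ENNReal.ofReal_le_ofReal (by norm_num))
    refine mul_le_mul_right ?_ _
    refine le_trans (le_of_eq (simpInt_one' (t-τ) _)) ?_
    split
    · next h => exact le_of_eq (by simp)
    · exact zero_le'
  | succ k ih =>
    intro t ht
    rw [show (fun τ : Fin (k+1+2) → ℝ => ∏ i, ENNReal.ofReal ((τ i) ^ (-(1/2):ℝ)))
        = fun τ => ∏ i, ENNReal.ofReal ((fun x : ℝ => x ^ (-(1/2):ℝ)) (τ i)) from rfl,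
      simpInt_succ_prod (k+1) t (fun x : ℝ => x ^ (-(1/2):ℝ))]
    refine le_trans (MeasureTheory.setLIntegral_mono'
      (g := fun τ => ENNReal.ofReal (τ ^ (-(1/2):ℝ)) * ENNReal.ofReal (2^(k+2) * t ^ ((k:ℝ)/2)))
      measurableSet_Ioo (fun τ hτ => ?_)) ?_
    · obtain ⟨hτ1, hτ2⟩ := Set.mem_Ioo.1 hτ
      refine mul_le_mul_right ?_ _
      refine le_trans (ih (t-τ) (by linarith)) (ENNReal.ofReal_le_ofReal ?_)
      refine mul_le_mul_of_nonneg_left ?_ (by positivity)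
      exact Real.rpow_le_rpow (by linarith) (by linarith) (by positivity)
    · rw [MeasureTheory.lintegral_mul_const' _ _ ENNReal.ofReal_ne_top, lint_rpow t ht,
        ← ENNReal.ofReal_mul (by positivity)]
      refine ENNReal.ofReal_le_ofReal (le_of_eq ?_)
      push_cast
      have h4 : ((k:ℝ)+1)/2 = (1:ℝ)/2 + (k:ℝ)/2 := by ring
      rw [h4, Real.rpow_add ht]
      ring

lemma keyF (k : ℕ) (t : ℝ) (ht : 0 < t) :
    simpInt (k+1) t (fun τ => ∏ i, ENNReal.ofReal ((τ i) ^ (-(1/2):ℝ)))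
      ≤ ENNReal.ofReal (2^(k+1) * t ^ (((k:ℝ)-1)/2)) := by
  match k with
  | 0 =>
    refine le_trans (le_of_eq (simpInt_one' t _)) ?_
    rw [if_pos ht]
    have heq : (∏ _i : Fin (0+1), ENNReal.ofReal (t ^ (-(1/2):ℝ)))
        = ENNReal.ofReal (t ^ (-(1/2):ℝ)) := by simp
    refine le_trans (le_of_eq heq) (ENNReal.ofReal_le_ofReal ?_)
    have h0 : (((0:ℕ):ℝ)-1)/2 = -(1/2) := by norm_num
    rw [h0]
    nlinarith [Real.rpow_nonneg ht.le (-(1/2):ℝ)]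
  | (k+1) =>
    refine le_trans (keyF_succ k t ht) (ENNReal.ofReal_le_ofReal (le_of_eq ?_))
    push_cast
    have h1 : ((k:ℝ)+1-1)/2 = (k:ℝ)/2 := by ring
    rw [h1]
set_option maxHeartbeats 8000000 in
theorem stmt13 (θ : ℝ) (Φ : R2 → ℝ) (hΦ : PhiOK Φ) (c0 : ℝ) (hc0 : 0 < c0) :
    ∃ ε0 : ℝ, ε0 ∈ Set.Ioo (0 : ℝ) 1 ∧ ∃ c : ℝ, 0 < c ∧
      ∀ ε : ℝ, 0 < ε → ε ≤ ε0 → ∀ t : ℝ, 0 < t → t ≤ c0 * ε ^ 2 →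
        Bfun (betaEps θ Φ ε) c0 ε t ≤ ENNReal.ofReal (c / (t * (Real.log t) ^ 2)) := by
  have hπ : (0:ℝ) < π := Real.pi_pos
  set A : ℝ := θ - 2 * Real.log 2 + 2 * Real.eulerMascheroniConstant +
      2 * ∫ x : R2, ∫ x' : R2, Φ x * Real.log (Real.sqrt (nrmsq (x - x'))) * Φ x' with hA
  set M : ℝ := max 3 (max |A| (|Real.log c0| + 1)) with hM
  have hM3 : (3:ℝ) ≤ M := le_max_left _ _
  have hMA : |A| ≤ M := le_trans (le_max_left _ _) (le_max_right _ _)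
  have hMc : |Real.log c0| + 1 ≤ M := le_trans (le_max_right _ _) (le_max_right _ _)
  refine ⟨Real.exp (-M), ⟨Real.exp_pos _, by
      rw [← Real.exp_zero]; exact Real.exp_lt_exp.2 (by linarith)⟩,
    9 * π * (3 * (Real.log c0)^2 + 60), by positivity, ?_⟩
  intro ε hε hεle t ht htle
  have hlogε : Real.log ε ≤ -M := by
    have h := Real.log_le_log hε hεle
    rwa [Real.log_exp] at h
  set L : ℝ := -Real.log ε with hLdef
  have hLM : M ≤ L := by rw [hLdef]; linarith
  have hL3 : (3:ℝ) ≤ L := hM3.trans hLM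
  have hL0 : (0:ℝ) < L := by linarith
  have hlogεneg : Real.log ε < 0 := by
    have : -L < 0 := by linarith
    rw [hLdef] at this; linarith
  have habs : |Real.log ε| = L := by rw [abs_of_neg hlogεneg, hLdef]
  have hlogeL : Real.log ε = -L := by rw [hLdef]; ring
  set B : ℝ := 3 * π / L with hBdef
  have hBpos : 0 < B := by rw [hBdef]; exact div_pos (by positivity) hL0
  have hβB : betaEps θ Φ ε ≤ B := by
    have h1 : betaEps θ Φ ε = 2 * π / L + π / L ^ 2 * A := by
      unfold betaEps
      rw [habs, hlogeL, ← hA]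
      ring
    rw [h1, hBdef]
    have hA_le : A ≤ L := le_trans (le_abs_self A) (hMA.trans hLM)
    have h2 : π / L ^ 2 * A ≤ π / L ^ 2 * L :=
      mul_le_mul_of_nonneg_left hA_le (div_pos hπ (pow_pos hL0 2)).le
    have h3 : 2 * π / L + π / L ^ 2 * L = 3 * π / L := by field_simp; ring
    linarith
  set a : ℝ := c0 * ε ^ 2 with hadef
  have ha0 : 0 < a := by rw [hadef]; exact mul_pos hc0 (pow_pos hε 2)
  have hta : t ≤ a := htle
  set s : ℝ := t ^ ((1:ℝ)/2) * a ^ (-(1/2):ℝ) with hsdef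
  have hs0 : 0 < s := by
    rw [hsdef]; exact mul_pos (Real.rpow_pos_of_pos ht _) (Real.rpow_pos_of_pos ha0 _)
  have hs1 : s ≤ 1 := by
    rw [hsdef]
    have h2 : t ^ ((1:ℝ)/2) ≤ a ^ ((1:ℝ)/2) := Real.rpow_le_rpow ht.le hta (by norm_num)
    have h3 : a ^ ((1:ℝ)/2) * a ^ (-(1/2):ℝ) = 1 := by
      rw [← Real.rpow_add ha0]; norm_num
    calc t ^ ((1:ℝ)/2) * a ^ (-(1/2):ℝ) ≤ a ^ ((1:ℝ)/2) * a ^ (-(1/2):ℝ) :=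
      mul_le_mul_of_nonneg_right h2 (Real.rpow_nonneg ha0.le _)
    _ = 1 := h3
  set r : ℝ := B / (2 * π) * s with hrdef
  have hr0 : 0 ≤ r := by
    rw [hrdef]; exact mul_nonneg (div_nonneg hBpos.le (by positivity)) hs0.le
  have hrhalf : r ≤ 1/2 := by
    rw [hrdef, hBdef]
    have h1 : 3 * π / L / (2 * π) * s ≤ 3 * π / L / (2 * π) * 1 :=
      mul_le_mul_of_nonneg_left hs1
        (div_nonneg (div_nonneg (by positivity) hL0.le) (by positivity))
    have h2 : 3 * π / L / (2 * π) * 1 = 3 / (2 * L) := by field_simp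
    have h3 : 3 / (2 * L) ≤ 1/2 := by
      rw [div_le_div_iff₀ (by linarith) (by norm_num)]
      linarith
    linarith
  -- logarithm facts
  have hloga : Real.log a = Real.log c0 - 2 * L := by
    rw [hadef, Real.log_mul hc0.ne' (pow_ne_zero 2 hε.ne'), Real.log_pow, hlogeL]
    push_cast; ring
  have hlogt_le : Real.log t ≤ -L - 1 := by
    have h1 : Real.log t ≤ Real.log a := Real.log_le_log ht hta
    have h2 : Real.log c0 ≤ |Real.log c0| := le_abs_self _
    have h4 : |Real.log c0| + 1 ≤ L := hMc.trans hLM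
    linarith
  have hlogt_neg : Real.log t < 0 := by linarith
  have hlt2 : 0 < (Real.log t)^2 := by nlinarith
  have hlogs : Real.log t = Real.log c0 - 2*L + 2*Real.log s := by
    have h1 : Real.log s = (1/2) * Real.log t + (-(1/2)) * Real.log a := by
      rw [hsdef, Real.log_mul (Real.rpow_pos_of_pos ht _).ne' (Real.rpow_pos_of_pos ha0 _).ne',
        Real.log_rpow ht, Real.log_rpow ha0]
    rw [hloga] at h1
    linarith
  have hslog : s * (Real.log s)^2 ≤ 4 := by
    have hsle : Real.log s ≤ 0 := Real.log_nonpos hs0.le hs1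
    have hinv : (0:ℝ) < s⁻¹ := inv_pos.2 hs0
    have h1 : Real.log ((s⁻¹) ^ ((1:ℝ)/2)) ≤ (s⁻¹) ^ ((1:ℝ)/2) - 1 :=
      Real.log_le_sub_one_of_pos (Real.rpow_pos_of_pos hinv _)
    rw [Real.log_rpow hinv, Real.log_inv] at h1
    have hrp : (0:ℝ) ≤ (s⁻¹) ^ ((1:ℝ)/2) := (Real.rpow_pos_of_pos hinv _).le
    have h2 : -Real.log s ≤ 2 * (s⁻¹) ^ ((1:ℝ)/2) := by linarith
    have h3 : (Real.log s)^2 ≤ (2 * (s⁻¹) ^ ((1:ℝ)/2))^2 := by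
      have hp := pow_le_pow_left₀ (by linarith : (0:ℝ) ≤ -Real.log s) h2 2
      calc (Real.log s)^2 = (-Real.log s)^2 := by ring
      _ ≤ _ := hp
    have h4 : ((s⁻¹) ^ ((1:ℝ)/2))^2 = s⁻¹ := by
      rw [← Real.rpow_natCast ((s⁻¹) ^ ((1:ℝ)/2)) 2, ← Real.rpow_mul hinv.le]
      norm_num
    have h5 : (Real.log s)^2 ≤ 4 * s⁻¹ := by
      calc (Real.log s)^2 ≤ (2 * (s⁻¹) ^ ((1:ℝ)/2))^2 := h3
      _ = 4 * ((s⁻¹) ^ ((1:ℝ)/2))^2 := by ring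
      _ = 4 * s⁻¹ := by rw [h4]
    calc s * (Real.log s)^2 ≤ s * (4 * s⁻¹) := mul_le_mul_of_nonneg_left h5 hs0.le
    _ = 4 := by field_simp
  have hkey : s * (Real.log t)^2 ≤ (3 * (Real.log c0)^2 + 60) * L^2 := by
    have h3 : (Real.log t)^2 ≤ 3*((Real.log c0)^2 + 4*L^2 + 4*(Real.log s)^2) := by
      rw [hlogs]
      nlinarith [sq_nonneg (Real.log c0 + 2*L), sq_nonneg (Real.log c0 - 2*Real.log s),
        sq_nonneg (2*Real.log s + 2*L)]
    have h4 : s * (Real.log t)^2 ≤ 3*(s*(Real.log c0)^2) + 12*(s*L^2) + 12*(s*(Real.log s)^2) := by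
      nlinarith [mul_le_mul_of_nonneg_left h3 hs0.le]
    have h5 : s*(Real.log c0)^2 ≤ (Real.log c0)^2 := by nlinarith [sq_nonneg (Real.log c0)]
    have h6 : s*L^2 ≤ L^2 := by nlinarith [sq_nonneg L]
    have hL1 : (1:ℝ) ≤ L^2 := by nlinarith
    have h7 : s * (Real.log t)^2 ≤ 3*(Real.log c0)^2 + 12*L^2 + 48 := by linarith
    have h8 : 3*(Real.log c0)^2 ≤ 3*(Real.log c0)^2 * L^2 := by
      nlinarith [sq_nonneg (Real.log c0)]
    have h9 : 12*L^2 + 48 ≤ 60 * L^2 := by nlinarith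
    nlinarith
  -- per-term bound
  have hterm : ∀ k : ℕ,
      simpInt (k+1) t (fun τ => ∏ i, ENNReal.ofReal
        (betaEps θ Φ ε / (4*π) * ((τ i)^2 + a * (τ i)) ^ (-(1/2):ℝ)))
        ≤ ENNReal.ofReal (r^(k+1) * t⁻¹) := by
    intro k
    have hD0 : (0:ℝ) ≤ B / (4*π) * a ^ (-(1/2):ℝ) :=
      mul_nonneg (div_nonneg hBpos.le (by positivity)) (Real.rpow_pos_of_pos ha0 _).le
    refine le_trans (simpInt_mono (k+1) t _
      (fun τ => ENNReal.ofReal (B / (4*π) * a ^ (-(1/2):ℝ)) ^ (k+1)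
        * ∏ i, ENNReal.ofReal ((τ i) ^ (-(1/2):ℝ))) (fun τ hτ => ?_)) ?_
    · have hb : ∀ i : Fin (k+1),
          ENNReal.ofReal (betaEps θ Φ ε / (4*π) * ((τ i)^2 + a * (τ i)) ^ (-(1/2):ℝ))
          ≤ ENNReal.ofReal (B / (4*π) * a ^ (-(1/2):ℝ)) * ENNReal.ofReal ((τ i) ^ (-(1/2):ℝ)) := by
        intro i
        rw [← ENNReal.ofReal_mul hD0]
        refine ENNReal.ofReal_le_ofReal ?_
        have hτi := hτ i
        have hbase : (0:ℝ) < (τ i)^2 + a * (τ i) := by nlinarith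
        have hX0 : (0:ℝ) ≤ ((τ i)^2 + a * (τ i)) ^ (-(1/2):ℝ) :=
          Real.rpow_nonneg hbase.le _
        have hax : a * τ i ≤ (τ i)^2 + a * (τ i) := by nlinarith
        have h2 : ((τ i)^2 + a * (τ i)) ^ (-(1/2):ℝ) ≤ (a * τ i) ^ (-(1/2):ℝ) :=
          Real.rpow_le_rpow_of_nonpos (mul_pos ha0 hτi) hax (by norm_num)
        have h3 : (a * τ i) ^ (-(1/2):ℝ) = a ^ (-(1/2):ℝ) * (τ i) ^ (-(1/2):ℝ) :=
          Real.mul_rpow ha0.le hτi.le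
        have h4 : betaEps θ Φ ε / (4*π) ≤ B / (4*π) :=
          (div_le_div_iff_of_pos_right (by positivity)).2 hβB
        calc betaEps θ Φ ε / (4*π) * ((τ i)^2 + a*(τ i))^(-(1/2):ℝ)
            ≤ B / (4*π) * ((τ i)^2 + a*(τ i))^(-(1/2):ℝ) := mul_le_mul_of_nonneg_right h4 hX0
        _ ≤ B / (4*π) * ((a * τ i) ^ (-(1/2):ℝ)) :=
            mul_le_mul_of_nonneg_left h2 (div_nonneg hBpos.le (by positivity))
        _ = B / (4*π) * a ^ (-(1/2):ℝ) * (τ i) ^ (-(1/2):ℝ) := by rw [h3]; ring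
      calc ∏ i, ENNReal.ofReal (betaEps θ Φ ε / (4*π) * ((τ i)^2 + a*(τ i))^(-(1/2):ℝ))
          ≤ ∏ i, (ENNReal.ofReal (B/(4*π) * a^(-(1/2):ℝ)) * ENNReal.ofReal ((τ i)^(-(1/2):ℝ))) :=
            Finset.prod_le_prod' (fun i _ => hb i)
      _ = ENNReal.ofReal (B/(4*π) * a^(-(1/2):ℝ)) ^ (k+1)
            * ∏ i, ENNReal.ofReal ((τ i)^(-(1/2):ℝ)) := by
            rw [Finset.prod_mul_distrib, Finset.prod_const, Finset.card_univ, Fintype.card_fin]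
    · rw [simpInt_const_mul (k+1) t _ (ENNReal.pow_ne_top ENNReal.ofReal_ne_top)]
      refine le_trans (mul_le_mul_right (keyF k t ht) _) ?_
      rw [← ENNReal.ofReal_pow hD0, ← ENNReal.ofReal_mul (pow_nonneg hD0 _)]
      refine ENNReal.ofReal_le_ofReal (le_of_eq ?_)
      have e1 : (t ^ ((1:ℝ)/2)) ^ (k+1) = t ^ (((k:ℝ)+1)/2) := by
        rw [← Real.rpow_natCast (t ^ ((1:ℝ)/2)) (k+1), ← Real.rpow_mul ht.le]
        congr 1; push_cast; ring
      have e2 : t ^ (((k:ℝ)+1)/2) = t ^ (((k:ℝ)-1)/2) * t := by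
        rw [← Real.rpow_add_one ht.ne']
        congr 1; ring
      have hrD : r = 2 * (B / (4*π) * a ^ (-(1/2):ℝ)) * t ^ ((1:ℝ)/2) := by
        rw [hrdef, hsdef]; ring
      have hgen1 : ∀ D T : ℝ, D^(k+1) * (2^(k+1) * T) = (2*D)^(k+1) * T := by
        intro D T; rw [mul_pow]; ring
      have hgen2 : ∀ P T : ℝ, P * (T * t) * t⁻¹ = P * T := by
        intro P T
        rw [mul_assoc, mul_assoc, mul_inv_cancel₀ ht.ne', mul_one]
      calc (B/(4*π) * a^(-(1/2):ℝ))^(k+1) * (2^(k+1) * t ^ (((k:ℝ)-1)/2))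
          = (2 * (B/(4*π) * a^(-(1/2):ℝ)))^(k+1) * t ^ (((k:ℝ)-1)/2) := hgen1 _ _
        _ = r^(k+1) * t⁻¹ := by
            rw [hrD, mul_pow (2 * (B / (4*π) * a ^ (-(1/2):ℝ))) (t ^ ((1:ℝ)/2)) (k+1), e1, e2,
              hgen2]
  -- assemble
  calc Bfun (betaEps θ Φ ε) c0 ε t
      = ENNReal.ofReal (betaEps θ Φ ε) * ∑' k : ℕ, simpInt (k+1) t
          (fun τ => ∏ i, ENNReal.ofReal
            (betaEps θ Φ ε / (4*π) * ((τ i)^2 + a*(τ i))^(-(1/2):ℝ))) := by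
        rw [hadef]; rfl
    _ ≤ ENNReal.ofReal B * ∑' k : ℕ, ENNReal.ofReal (r^(k+1) * t⁻¹) :=
        mul_le_mul' (ENNReal.ofReal_le_ofReal hβB) (ENNReal.tsum_le_tsum hterm)
    _ = ENNReal.ofReal B * ((∑' k : ℕ, ENNReal.ofReal r ^ (k+1)) * ENNReal.ofReal t⁻¹) := by
        congr 1
        rw [← ENNReal.tsum_mul_right]
        refine tsum_congr (fun k => ?_)
        rw [ENNReal.ofReal_mul (pow_nonneg hr0 _), ENNReal.ofReal_pow hr0]
    _ ≤ ENNReal.ofReal B * ((ENNReal.ofReal r * 2) * ENNReal.ofReal t⁻¹) := by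
        refine mul_le_mul_right (mul_le_mul_left ?_ _) _
        rw [ENNReal.tsum_geometric_add_one]
        refine mul_le_mul_right ?_ _
        have hq : ENNReal.ofReal r ≤ 2⁻¹ := by
          have h2 : ((2:ℝ≥0∞))⁻¹ = ENNReal.ofReal (1/2) := by
            rw [one_div, ENNReal.ofReal_inv_of_pos (by norm_num)]
            norm_num
          rw [h2]
          exact ENNReal.ofReal_le_ofReal hrhalf
        calc (1 - ENNReal.ofReal r)⁻¹ ≤ ((1:ℝ≥0∞) - 2⁻¹)⁻¹ :=
              ENNReal.inv_le_inv' (tsub_le_tsub_left hq 1)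
        _ = 2 := by rw [ENNReal.one_sub_inv_two]; simp
    _ = ENNReal.ofReal (B * (r * 2 * t⁻¹)) := by
        rw [ENNReal.ofReal_mul hBpos.le,
          ENNReal.ofReal_mul (mul_nonneg hr0 (by norm_num : (0:ℝ) ≤ 2)),
          ENNReal.ofReal_mul hr0, ENNReal.ofReal_ofNat]
    _ ≤ ENNReal.ofReal (9 * π * (3 * (Real.log c0)^2 + 60) / (t * (Real.log t) ^ 2)) := by
        refine ENNReal.ofReal_le_ofReal ?_
        have hBr : B * (r * 2 * t⁻¹) = 9*π*s / L^2 * t⁻¹ := by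
          rw [hrdef, hBdef]; field_simp; ring
        rw [hBr]
        have h9 : 9*π*s / L^2 ≤ 9*π*(3*(Real.log c0)^2+60) / (Real.log t)^2 := by
          rw [div_le_div_iff₀ (pow_pos hL0 2) hlt2]
          calc 9*π*s*(Real.log t)^2 = 9*π*(s*(Real.log t)^2) := by ring
          _ ≤ 9*π*((3*(Real.log c0)^2+60)*L^2) :=
              mul_le_mul_of_nonneg_left hkey (by positivity)
          _ = 9*π*(3*(Real.log c0)^2+60)*L^2 := by ring
        calc 9*π*s / L^2 * t⁻¹ ≤ 9*π*(3*(Real.log c0)^2+60) / (Real.log t)^2 * t⁻¹ :=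
            mul_le_mul_of_nonneg_right h9 (inv_nonneg.2 ht.le)
        _ = 9 * π * (3 * (Real.log c0)^2 + 60) / (t * (Real.log t) ^ 2) := by
            field_simp

end
end

section
/- For all λ > 0 and σ > 0: ∫_0^∞ e^{−λs} (s(s+σ))^{−1/2} ds = −log(λσ) + 2 ∫_0^∞ e^{−s} log(√s + √(s + λσ)) ds. In particular (λ = 1), for all s₀ > 0: ∫_0^∞ e^{−s} (s² + s s₀)^{−1/2} ds = −log s₀ + 2 ∫_0^∞ e^{−s} log(√s + √(s + s₀)) ds. -/
open MeasureTheory Real Filter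
open scoped ENNReal NNReal BigOperators

noncomputable section
open MeasureTheory Real Filter Set
open scoped ENNReal NNReal BigOperators Topology

lemma sqrt_le_one_add (x : ℝ) (hx : 0 ≤ x) : Real.sqrt x ≤ 1 + x := by
  nlinarith [Real.sq_sqrt hx, Real.sqrt_nonneg x]

lemma abs_log_bound (a : ℝ) (ha : 0 < a) (s : ℝ) (hs : 0 ≤ s) :
    |Real.log (Real.sqrt s + Real.sqrt (s + a))| ≤ (2 + a + (Real.sqrt a)⁻¹) + 2 * s := by
  set y := Real.sqrt s + Real.sqrt (s + a) with hy
  have hsa : 0 < Real.sqrt (s + a) := Real.sqrt_pos.mpr (by linarith)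
  have hy0 : 0 < y := by positivity
  have hya : Real.sqrt a ≤ y := by
    have : Real.sqrt a ≤ Real.sqrt (s + a) := Real.sqrt_le_sqrt (by linarith)
    have := Real.sqrt_nonneg s
    simp only [hy]; linarith
  have hsqa : 0 < Real.sqrt a := Real.sqrt_pos.mpr ha
  rw [abs_le]
  constructor
  · have h1 : Real.log ((Real.sqrt a)⁻¹) ≤ (Real.sqrt a)⁻¹ - 1 :=
      Real.log_le_sub_one_of_pos (by positivity)
    have h2 : Real.log (Real.sqrt a) ≤ Real.log y := (Real.log_le_log_iff hsqa hy0).mpr hya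
    rw [Real.log_inv] at h1
    have : 0 ≤ (Real.sqrt a)⁻¹ := by positivity
    linarith
  · have h1 : Real.log y ≤ y - 1 := Real.log_le_sub_one_of_pos hy0
    have h2 : Real.sqrt s ≤ 1 + s := sqrt_le_one_add s hs
    have h3 : Real.sqrt (s + a) ≤ 1 + (s + a) := sqrt_le_one_add _ (by linarith)
    have : 0 ≤ (Real.sqrt a)⁻¹ := by positivity
    simp only [hy] at h1 ⊢
    linarith

lemma intg (a : ℝ) (ha : 0 < a) :
    IntegrableOn (fun s : ℝ => Real.exp (-s) * (s * (s + a)) ^ (-(1/2) : ℝ)) (Ioi 0) := by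
  have hmeas : AEStronglyMeasurable (fun s : ℝ => Real.exp (-s) * (s * (s + a)) ^ (-(1/2) : ℝ))
      (volume.restrict (Ioi 0)) := by
    apply ContinuousOn.aestronglyMeasurable _ measurableSet_Ioi
    apply ContinuousOn.mul (Continuous.continuousOn (by continuity))
    apply ContinuousOn.rpow_const (by fun_prop)
    intro x hx
    left
    have hx0 : (0:ℝ) < x := hx
    positivity
  have hG : IntegrableOn (fun x : ℝ => Real.exp (-x) * x ^ (-(1/2) : ℝ)) (Ioi 0) := by
    have := Real.GammaIntegral_convergent (s := 1/2) (by norm_num)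
    norm_num at this
    exact this
  refine Integrable.mono (hG.const_mul ((a : ℝ) ^ (-(1/2) : ℝ))) hmeas ?_
  filter_upwards [ae_restrict_mem measurableSet_Ioi] with s hs
  have hs0 : (0:ℝ) < s := hs
  have h1 : (s * (s + a)) ^ (-(1/2) : ℝ) ≤ (s * a) ^ (-(1/2) : ℝ) :=
    Real.rpow_le_rpow_of_nonpos (by positivity) (by nlinarith) (by norm_num)
  have h2 : (s * a) ^ (-(1/2) : ℝ) = s ^ (-(1/2) : ℝ) * a ^ (-(1/2) : ℝ) :=
    Real.mul_rpow hs0.le ha.le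
  have he : (0:ℝ) < Real.exp (-s) := Real.exp_pos _
  rw [Real.norm_eq_abs, Real.norm_eq_abs, abs_of_nonneg (by positivity),
    abs_of_nonneg (by positivity)]
  calc Real.exp (-s) * (s * (s + a)) ^ (-(1/2) : ℝ)
      ≤ Real.exp (-s) * (s ^ (-(1/2) : ℝ) * a ^ (-(1/2) : ℝ)) := by
        rw [← h2]; exact mul_le_mul_of_nonneg_left h1 he.le
    _ = a ^ (-(1/2) : ℝ) * (Real.exp (-s) * s ^ (-(1/2) : ℝ)) := by ring

lemma intL (a : ℝ) (ha : 0 < a) :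
    IntegrableOn (fun s : ℝ =>
      Real.exp (-s) * Real.log (Real.sqrt s + Real.sqrt (s + a))) (Ioi 0) := by
  set C := (2 + a + (Real.sqrt a)⁻¹) with hC
  have h1 : IntegrableOn (fun s : ℝ => Real.exp (-s)) (Ioi 0) := by
    have := exp_neg_integrableOn_Ioi 0 (one_pos (α := ℝ))
    simpa using this
  have h2 : IntegrableOn (fun s : ℝ => Real.exp (-s) * s) (Ioi 0) := by
    have := Real.GammaIntegral_convergent (s := 2) (by norm_num)
    norm_num [Real.rpow_one] at this
    exact this
  have hbd : IntegrableOn (fun s : ℝ => Real.exp (-s) * (C + 2 * s)) (Ioi 0) := by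
    have : (fun s : ℝ => Real.exp (-s) * (C + 2 * s))
        = fun s => C * Real.exp (-s) + 2 * (Real.exp (-s) * s) := by funext s; ring
    rw [this]
    exact (h1.const_mul C).add (h2.const_mul 2)
  have hmeas : AEStronglyMeasurable
      (fun s : ℝ => Real.exp (-s) * Real.log (Real.sqrt s + Real.sqrt (s + a)))
      (volume.restrict (Ioi 0)) := by
    apply ContinuousOn.aestronglyMeasurable _ measurableSet_Ioi
    apply ContinuousOn.mul (Continuous.continuousOn (by continuity))
    apply ContinuousOn.log (by fun_prop)
    intro x hx
    have hx0 : (0:ℝ) < x := hx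
    have : 0 < Real.sqrt (x + a) := Real.sqrt_pos.mpr (by linarith)
    have := Real.sqrt_nonneg x
    positivity
  refine Integrable.mono hbd hmeas ?_
  filter_upwards [ae_restrict_mem measurableSet_Ioi] with s hs
  have hs0 : (0:ℝ) < s := hs
  have hb := abs_log_bound a ha s hs0.le
  have he : (0:ℝ) < Real.exp (-s) := Real.exp_pos _
  rw [Real.norm_eq_abs, Real.norm_eq_abs, abs_mul, abs_of_nonneg he.le,
    abs_of_nonneg (by positivity : (0:ℝ) ≤ Real.exp (-s) * (C + 2 * s))]
  exact mul_le_mul_of_nonneg_left hb he.le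

lemma key (a : ℝ) (ha : 0 < a) :
    (∫ s in Set.Ioi (0 : ℝ), Real.exp (-s) * (s * (s + a)) ^ (-(1/2) : ℝ)) =
      -Real.log a +
        2 * ∫ s in Set.Ioi (0 : ℝ),
          Real.exp (-s) * Real.log (Real.sqrt s + Real.sqrt (s + a)) := by
  set f : ℝ → ℝ := fun s => 2 * Real.exp (-s) * Real.log (Real.sqrt s + Real.sqrt (s + a))
    with hf_def
  set F' : ℝ → ℝ := fun s => Real.exp (-s) * (s * (s + a)) ^ (-(1/2) : ℝ) - f s with hF'_def
  have hg := intg a ha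
  have hL := intL a ha
  have hf_int : IntegrableOn f (Ioi 0) := by
    have : f = fun s => 2 * (Real.exp (-s) * Real.log (Real.sqrt s + Real.sqrt (s + a))) := by
      funext s; simp [hf_def]; ring
    rw [this]
    exact hL.const_mul 2
  have hF'_int : IntegrableOn F' (Ioi 0) := hg.sub hf_int
  -- derivative
  have hderiv : ∀ s ∈ Ioi (0:ℝ), HasDerivAt f (F' s) s := by
    intro s hs
    have hs0 : (0:ℝ) < s := hs
    have hsa0 : (0:ℝ) < s + a := by linarith
    have hss : 0 < Real.sqrt s := Real.sqrt_pos.mpr hs0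
    have hsa : 0 < Real.sqrt (s + a) := Real.sqrt_pos.mpr hsa0
    have hy0 : 0 < Real.sqrt s + Real.sqrt (s + a) := by positivity
    have h1 : HasDerivAt (fun x : ℝ => Real.sqrt x) (1 / (2 * Real.sqrt s)) s :=
      Real.hasDerivAt_sqrt hs0.ne'
    have h2 : HasDerivAt (fun x : ℝ => Real.sqrt (x + a)) (1 / (2 * Real.sqrt (s + a))) s := by
      have := (Real.hasDerivAt_sqrt hsa0.ne').comp s ((hasDerivAt_id s).add_const a)
      simpa [Function.comp_def] using this
    have hy : HasDerivAt (fun x : ℝ => Real.sqrt x + Real.sqrt (x + a))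
        (1 / (2 * Real.sqrt s) + 1 / (2 * Real.sqrt (s + a))) s := h1.add h2
    have hlog : HasDerivAt (fun x : ℝ => Real.log (Real.sqrt x + Real.sqrt (x + a)))
        ((1 / (2 * Real.sqrt s) + 1 / (2 * Real.sqrt (s + a))) /
          (Real.sqrt s + Real.sqrt (s + a))) s := hy.log hy0.ne'
    have hexp : HasDerivAt (fun x : ℝ => Real.exp (-x)) (-Real.exp (-s)) s := by
      have := (Real.hasDerivAt_exp (-s)).comp s (hasDerivAt_neg s)
      simpa [Function.comp_def] using this
    have hfull := ((hexp.const_mul 2).mul hlog)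
    have hkey : (1 / (2 * Real.sqrt s) + 1 / (2 * Real.sqrt (s + a))) /
        (Real.sqrt s + Real.sqrt (s + a)) = (2 * (Real.sqrt s * Real.sqrt (s + a)))⁻¹ := by
      rw [div_eq_iff hy0.ne']
      field_simp
      ring
    have hrpow : (s * (s + a)) ^ (-(1/2) : ℝ) = (Real.sqrt s * Real.sqrt (s + a))⁻¹ := by
      rw [Real.rpow_neg (by positivity), ← Real.sqrt_eq_rpow, Real.sqrt_mul hs0.le]
    have heq : 2 * -Real.exp (-s) * Real.log (Real.sqrt s + Real.sqrt (s + a)) +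
        2 * Real.exp (-s) * ((1 / (2 * Real.sqrt s) + 1 / (2 * Real.sqrt (s + a))) /
          (Real.sqrt s + Real.sqrt (s + a))) = F' s := by
      rw [hkey]
      simp only [hF'_def, hf_def, hrpow]
      have h2' : (Real.sqrt s * Real.sqrt (s + a)) ≠ 0 := by positivity
      field_simp
      ring
    rw [← heq]
    exact hfull
  -- continuity at 0
  have hcont : ContinuousWithinAt f (Ici 0) 0 := by
    apply ContinuousAt.continuousWithinAt
    have h1 : ContinuousAt (fun x : ℝ => Real.sqrt x + Real.sqrt (x + a)) 0 := by fun_prop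
    have h2 : ContinuousAt (fun x : ℝ => Real.log (Real.sqrt x + Real.sqrt (x + a))) 0 := by
      apply h1.log
      have : 0 < Real.sqrt a := Real.sqrt_pos.mpr ha
      simp [this.ne']
    exact (by fun_prop : ContinuousAt (fun x : ℝ => 2 * Real.exp (-x)) 0).mul h2
  -- limit at infinity
  have htend : Tendsto f atTop (𝓝 0) := by
    set C := (2 + a + (Real.sqrt a)⁻¹) with hC
    apply squeeze_zero_norm' (a := fun s => 2 * Real.exp (-s) * (C + 2 * s))
    · filter_upwards [eventually_gt_atTop (0:ℝ)] with s hs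
      have hb := abs_log_bound a ha s hs.le
      have he : (0:ℝ) < Real.exp (-s) := Real.exp_pos _
      rw [Real.norm_eq_abs, hf_def]
      rw [abs_mul, abs_of_nonneg (by positivity : (0:ℝ) ≤ 2 * Real.exp (-s))]
      exact mul_le_mul_of_nonneg_left hb (by positivity)
    · have hx1 : Tendsto (fun s : ℝ => Real.exp (-s)) atTop (𝓝 0) :=
        Real.tendsto_exp_neg_atTop_nhds_zero
      have hx2 : Tendsto (fun s : ℝ => s ^ 1 * Real.exp (-s)) atTop (𝓝 0) :=
        Real.tendsto_pow_mul_exp_neg_atTop_nhds_zero 1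
      have : (fun s : ℝ => 2 * Real.exp (-s) * (C + 2 * s))
          = fun s => (2 * C) * Real.exp (-s) + 4 * (s ^ 1 * Real.exp (-s)) := by
        funext s; ring
      rw [this]
      have := (hx1.const_mul (2 * C)).add (hx2.const_mul 4)
      simpa using this
  have hFTC := integral_Ioi_of_hasDerivAt_of_tendsto hcont hderiv hF'_int htend
  have hf0 : f 0 = Real.log a := by
    simp [hf_def, Real.log_sqrt ha.le]
    ring
  rw [hF'_def] at hFTC
  rw [integral_sub hg hf_int, hf0, zero_sub] at hFTC
  have hf_int_eq : (∫ s in Ioi (0:ℝ), f s)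
      = 2 * ∫ s in Ioi (0:ℝ), Real.exp (-s) * Real.log (Real.sqrt s + Real.sqrt (s + a)) := by
    rw [← MeasureTheory.integral_const_mul]
    congr 1
    funext s
    simp [hf_def]; ring
  rw [hf_int_eq] at hFTC
  linarith

end

noncomputable section
open MeasureTheory Real Filter
open scoped ENNReal NNReal BigOperators

theorem stmt15 :
    (∀ lam σ : ℝ, 0 < lam → 0 < σ →
      (∫ s in Set.Ioi (0 : ℝ), Real.exp (-lam * s) * (s * (s + σ)) ^ (-(1/2) : ℝ)) =
        -Real.log (lam * σ) +
          2 * ∫ s in Set.Ioi (0 : ℝ),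
            Real.exp (-s) * Real.log (Real.sqrt s + Real.sqrt (s + lam * σ))) ∧
    (∀ s0 : ℝ, 0 < s0 →
      (∫ s in Set.Ioi (0 : ℝ), Real.exp (-s) * (s ^ 2 + s * s0) ^ (-(1/2) : ℝ)) =
        -Real.log s0 +
          2 * ∫ s in Set.Ioi (0 : ℝ),
            Real.exp (-s) * Real.log (Real.sqrt s + Real.sqrt (s + s0))) := by
  constructor
  · intro lam σ hl hσ
    have h := key (lam * σ) (mul_pos hl hσ)
    set g : ℝ → ℝ := fun u => Real.exp (-u) * (u * (u + lam * σ)) ^ (-(1/2) : ℝ) with hg_def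
    have step1 : Set.EqOn (fun s : ℝ => Real.exp (-lam * s) * (s * (s + σ)) ^ (-(1/2) : ℝ))
        (fun s : ℝ => lam • g (lam * s)) (Set.Ioi 0) := by
      intro s hs
      have hs0 : (0:ℝ) < s := hs
      simp only [hg_def, smul_eq_mul]
      have h1 : (lam * s) * (lam * s + lam * σ) = lam ^ 2 * (s * (s + σ)) := by ring
      have h2 : (lam ^ 2 * (s * (s + σ))) ^ (-(1/2) : ℝ)
          = (lam ^ 2) ^ (-(1/2) : ℝ) * (s * (s + σ)) ^ (-(1/2) : ℝ) :=
        Real.mul_rpow (sq_nonneg lam) (by positivity)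
      have h3 : (lam ^ 2) ^ (-(1/2) : ℝ) = lam⁻¹ := by
        rw [← Real.rpow_natCast lam 2, ← Real.rpow_mul hl.le]
        norm_num [Real.rpow_neg_one]
      rw [h1, h2, h3]
      have : -(lam * s) = -lam * s := by ring
      rw [this]
      field_simp
    rw [setIntegral_congr_fun measurableSet_Ioi step1, integral_smul,
      integral_comp_mul_left_Ioi g 0 hl, mul_zero, smul_smul,
      mul_inv_cancel₀ hl.ne', one_smul]
    exact h
  · intro s0 hs0
    have h := key s0 hs0
    have hr : ∀ s : ℝ, s ^ 2 + s * s0 = s * (s + s0) := fun s => by ring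
    simp_rw [hr]
    exact h


end
end

section
/- For every c₂ ∈ [1,∞) there exists c = c(c₂) ∈ (0,∞) such that for all t > 0: ∫_{c₂ e³}^{max(c₂ e³, 1/t)} (log(x/c₂))^{−2} dx ≤ c e^{t} t^{−1} (log(min(t,1/2)))^{−2}. (When 1/t ≤ c₂ e³ the left-hand side is interpreted as 0.) -/
open MeasureTheory Real Filter
open scoped ENNReal NNReal BigOperators

noncomputable section
open MeasureTheory Real Filter
open scoped ENNReal NNReal BigOperators

lemma aux_deriv (c2 : ℝ) (hc2 : 0 < c2) (x : ℝ) (hx : 0 < x)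
    (hL : Real.log (x / c2) ≠ 0) :
    HasDerivAt (fun y => 3 * y / (Real.log (y / c2)) ^ 2)
      (3 / (Real.log (x / c2)) ^ 2 - 6 / (Real.log (x / c2)) ^ 3) x := by
  have hxc : x / c2 ≠ 0 := by positivity
  have hdiv : HasDerivAt (fun y : ℝ => y / c2) (1 / c2) x := by
    simpa using (hasDerivAt_id x).div_const c2
  have hlog : HasDerivAt (fun y => Real.log (y / c2)) ((x / c2)⁻¹ * (1 / c2)) x :=
    by have := (Real.hasDerivAt_log hxc).comp x hdiv; exact this
  have hsq : HasDerivAt (fun y => Real.log (y / c2) ^ 2)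
      (((2:ℕ):ℝ) * Real.log (x / c2) ^ (2 - 1) * ((x / c2)⁻¹ * (1 / c2))) x := hlog.pow 2
  have hnum : HasDerivAt (fun y : ℝ => 3 * y) 3 x := by
    simpa using (hasDerivAt_id x).const_mul (3 : ℝ)
  have h := hnum.fun_div hsq (pow_ne_zero 2 hL)
  refine h.congr_deriv ?_
  field_simp
  ring

theorem stmt17 (c2 : ℝ) (hc2 : 1 ≤ c2) :
    ∃ c : ℝ, 0 < c ∧ ∀ t : ℝ, 0 < t →
      (∫ x in Set.Ioc (c2 * Real.exp 3) (max (c2 * Real.exp 3) (1 / t)),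
          ((Real.log (x / c2)) ^ 2)⁻¹) ≤
        c * Real.exp t / (t * (Real.log (min t (1/2))) ^ 2) := by
  have hc2' : (0 : ℝ) < c2 := lt_of_lt_of_le one_pos hc2
  have hlc2 : 0 ≤ Real.log c2 := Real.log_nonneg hc2
  refine ⟨3 * (1 + Real.log c2 / 3) ^ 2, by positivity, fun t ht => ?_⟩
  set a := c2 * Real.exp 3 with ha
  have ha0 : 0 < a := by positivity
  have hRHSpos : 0 ≤ 3 * (1 + Real.log c2 / 3) ^ 2 * Real.exp t /
      (t * (Real.log (min t (1/2))) ^ 2) := by positivity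
  rcases le_or_gt (1 / t) a with hcase | hcase
  · rw [max_eq_left hcase]
    simpa using hRHSpos
  · -- main case
    rw [max_eq_right hcase.le]
    set b := 1 / t with hb
    have hab : a ≤ b := hcase.le
    have hb0 : 0 < b := lt_trans ha0 hcase
    -- basic log facts on [a,b]
    have hLge : ∀ x ∈ Set.Icc a b, 3 ≤ Real.log (x / c2) := by
      intro x hx
      have hx0 : 0 < x := lt_of_lt_of_le ha0 hx.1
      have : Real.exp 3 ≤ x / c2 := by
        rw [le_div_iff₀ hc2']
        calc Real.exp 3 * c2 = a := by ring
          _ ≤ x := hx.1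
      calc (3:ℝ) = Real.log (Real.exp 3) := (Real.log_exp 3).symm
        _ ≤ Real.log (x / c2) := Real.log_le_log (Real.exp_pos 3) this
    -- integrability
    have hg_cont : ContinuousOn (fun x => ((Real.log (x / c2)) ^ 2)⁻¹) (Set.Icc a b) := by
      apply ContinuousOn.inv₀
      · exact ((Real.continuousOn_log.comp (continuousOn_id.div_const c2)
          (fun x hx => by
            have hx0 : 0 < x := lt_of_lt_of_le ha0 hx.1
            simp [Set.mem_compl_iff, div_eq_zero_iff, hx0.ne', hc2'.ne'])).pow 2)
      · intro x hx
        have := hLge x hx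
        positivity
    have hF'_cont : ContinuousOn
        (fun x => 3 / (Real.log (x / c2)) ^ 2 - 6 / (Real.log (x / c2)) ^ 3)
        (Set.Icc a b) := by
      have hlc : ContinuousOn (fun x => Real.log (x / c2)) (Set.Icc a b) :=
        Real.continuousOn_log.comp (continuousOn_id.div_const c2)
          (fun x hx => by
            have hx0 : 0 < x := lt_of_lt_of_le ha0 hx.1
            simp [Set.mem_compl_iff, div_eq_zero_iff, hx0.ne', hc2'.ne'])
      apply ContinuousOn.sub
      · exact continuousOn_const.div (hlc.pow 2) (fun x hx => by
          have := hLge x hx; positivity)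
      · exact continuousOn_const.div (hlc.pow 3) (fun x hx => by
          have := hLge x hx; positivity)
    have huIcc : Set.uIcc a b = Set.Icc a b := Set.uIcc_of_le hab
    have hg_int : IntervalIntegrable (fun x => ((Real.log (x / c2)) ^ 2)⁻¹)
        volume a b := (huIcc ▸ hg_cont).intervalIntegrable
    have hF'_int : IntervalIntegrable
        (fun x => 3 / (Real.log (x / c2)) ^ 2 - 6 / (Real.log (x / c2)) ^ 3)
        volume a b := (huIcc ▸ hF'_cont).intervalIntegrable
    -- pointwise bound
    have hle : ∀ x ∈ Set.Icc a b,
        ((Real.log (x / c2)) ^ 2)⁻¹ ≤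
        3 / (Real.log (x / c2)) ^ 2 - 6 / (Real.log (x / c2)) ^ 3 := by
      intro x hx
      have hL3 := hLge x hx
      have hL0 : 0 < Real.log (x / c2) := lt_of_lt_of_le (by norm_num) hL3
      rw [inv_eq_one_div, div_sub_div _ _ (by positivity) (by positivity),
        div_le_div_iff₀ (by positivity) (by positivity)]
      nlinarith [pow_pos hL0 4, mul_le_mul_of_nonneg_left hL3 (pow_pos hL0 4).le]
    -- FTC
    have hftc : ∫ x in a..b,
        (3 / (Real.log (x / c2)) ^ 2 - 6 / (Real.log (x / c2)) ^ 3) =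
        3 * b / (Real.log (b / c2)) ^ 2 - 3 * a / (Real.log (a / c2)) ^ 2 := by
      have := intervalIntegral.integral_eq_sub_of_hasDerivAt
        (f := fun y => 3 * y / (Real.log (y / c2)) ^ 2)
        (f' := fun x => 3 / (Real.log (x / c2)) ^ 2 - 6 / (Real.log (x / c2)) ^ 3)
        (a := a) (b := b)
        (fun x hx => by
          rw [huIcc] at hx
          have hx0 : 0 < x := lt_of_lt_of_le ha0 hx.1
          have hL3 := hLge x hx
          exact aux_deriv c2 hc2' x hx0 (by linarith)) hF'_int
      simpa using this
    have hbound : (∫ x in Set.Ioc a b, ((Real.log (x / c2)) ^ 2)⁻¹) ≤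
        3 * b / (Real.log (b / c2)) ^ 2 := by
      rw [← intervalIntegral.integral_of_le hab]
      calc (∫ x in a..b, ((Real.log (x / c2)) ^ 2)⁻¹)
          ≤ ∫ x in a..b, (3 / (Real.log (x / c2)) ^ 2 - 6 / (Real.log (x / c2)) ^ 3) :=
            intervalIntegral.integral_mono_on hab hg_int hF'_int hle
        _ = 3 * b / (Real.log (b / c2)) ^ 2 - 3 * a / (Real.log (a / c2)) ^ 2 := hftc
        _ ≤ 3 * b / (Real.log (b / c2)) ^ 2 := by
            have hLa := hLge a ⟨le_refl a, hab⟩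
            have : 0 ≤ 3 * a / (Real.log (a / c2)) ^ 2 := by positivity
            linarith
    refine le_trans hbound ?_
    -- final algebra
    have ht_small : t < 1 / 2 := by
      have h1 : a < 1 / t := hcase
      have he3 : (2 : ℝ) < Real.exp 3 := by
        nlinarith [Real.add_one_le_exp (3:ℝ)]
      have : (2 : ℝ) < 1 / t := by nlinarith [mul_le_mul_of_nonneg_right hc2 (Real.exp_pos 3).le]
      rw [lt_div_iff₀ ht] at this
      linarith
    rw [min_eq_left ht_small.le]
    have hct : c2 * t < Real.exp (-3) := by
      have h1 : c2 * Real.exp 3 * t < 1 := by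
        rw [← lt_div_iff₀ ht]; exact hcase
      have h2 : c2 * t < 1 / Real.exp 3 := by
        rw [lt_div_iff₀ (Real.exp_pos 3)]; nlinarith
      rw [Real.exp_neg, ← one_div]; exact h2
    have hct0 : 0 < c2 * t := by positivity
    set s := -(Real.log c2 + Real.log t) with hs
    have hs3 : 3 < s := by
      have := Real.log_lt_log hct0 hct
      rw [Real.log_mul hc2'.ne' ht.ne', Real.log_exp] at this
      linarith
    have hlogb : Real.log (b / c2) = s := by
      rw [hb, hs, one_div, div_eq_mul_inv, Real.log_mul (by positivity) (by positivity),
        Real.log_inv, Real.log_inv]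
      ring
    have hlogt : Real.log t = -(s + Real.log c2) := by rw [hs]; ring
    clear_value s
    rw [hlogb, hlogt]
    have hlt2 : (-(s + Real.log c2)) ^ 2 ≤ ((1 + Real.log c2 / 3) * s) ^ 2 := by
      have h1 : s + Real.log c2 ≤ (1 + Real.log c2 / 3) * s := by nlinarith
      have h2 : 0 ≤ s + Real.log c2 := by linarith
      nlinarith
    have hexp : 1 ≤ Real.exp t := by
      rw [Real.one_le_exp_iff]; exact ht.le
    have hsc : 0 < s + Real.log c2 := by linarith
    have hs2pos : (0:ℝ) < s ^ 2 := by positivity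
    have hden : (0:ℝ) < t * (-(s + Real.log c2)) ^ 2 := by
      have h0 : (-(s + Real.log c2)) ^ 2 = (s + Real.log c2) ^ 2 := by ring
      rw [h0]; positivity
    rw [hb, div_le_div_iff₀ hs2pos hden]
    calc 3 * (1 / t) * (t * (-(s + Real.log c2)) ^ 2)
        = 3 * (-(s + Real.log c2)) ^ 2 := by field_simp
      _ ≤ 3 * ((1 + Real.log c2 / 3) * s) ^ 2 := by linarith
      _ = 3 * (1 + Real.log c2 / 3) ^ 2 * 1 * s ^ 2 := by ring
      _ ≤ 3 * (1 + Real.log c2 / 3) ^ 2 * Real.exp t * s ^ 2 := by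
            have hs2 : (0:ℝ) ≤ s ^ 2 := sq_nonneg s
            have hc : (0:ℝ) ≤ 3 * (1 + Real.log c2 / 3) ^ 2 := by positivity
            exact mul_le_mul_of_nonneg_right (mul_le_mul_of_nonneg_left hexp hc) hs2

end
end
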